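/- arXiv:2406.13580 — 5 statements merged into one kernel-verified Lean document; each statement's English description precedes it below -/
import Mathlib

section
/- Let S₃ = ⟨d₁,d₂,d₃⟩ be a numerical semigroup minimally generated by three positive integers. Then g₃ > √(3·π₃), i.e. the Frobenius number satisfies F₃ > √(3·d₁d₂d₃) − (d₁+d₂+d₃) (Davison's lower bound). -/
/-- A numerical semigroup: a subset of ℕ containing 0, closed under addition,
with finite complement (the set of gaps). -/
def IsNumericalSemigroup (S : Set ℕ) : Prop :=
  0 ∈ S ∧ (∀ a ∈ S, ∀ b ∈ S, a + b ∈ S) ∧ (Sᶜ : Set ℕ).Finite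

/-- The genus: the number of gaps of `S`. -/
noncomputable def genus (S : Set ℕ) : ℕ := (Sᶜ : Set ℕ).ncard

/-- The Frobenius number: the largest gap of `S`. -/
noncomputable def frobeniusNum (S : Set ℕ) : ℕ := sSup (Sᶜ : Set ℕ)

/-- The conductorNum: the least `c` such that every `n ≥ c` belongs to `S`
(equal to `frobeniusNum S + 1` when `S ≠ ℕ`). -/
noncomputable def conductorNum (S : Set ℕ) : ℕ := sInf {c : ℕ | ∀ n : ℕ, c ≤ n → n ∈ S}

/-- `S` is symmetric: for every `n` with `0 ≤ n ≤ F` (where `F = conductorNum S - 1` is the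
Frobenius number), `n` is a gap iff `F - n ∈ S`. -/
def IsSymmetric (S : Set ℕ) : Prop :=
  ∀ n : ℕ, n < conductorNum S → (n ∉ S ↔ conductorNum S - 1 - n ∈ S)

/-- The submonoid of ℕ generated by two elements. -/
def gen2 (x y : ℕ) : Set ℕ := {n : ℕ | ∃ a b : ℕ, n = a * x + b * y}

/-- The numerical semigroup `⟨d₁, d₂, d₃⟩` generated by three elements. -/
def gen3 (d₁ d₂ d₃ : ℕ) : Set ℕ := {n : ℕ | ∃ a b c : ℕ, n = a * d₁ + b * d₂ + c * d₃}

/-- `⟨d₁, d₂, d₃⟩` is minimally generated by the three positive integers `d₁ < d₂ < d₃`: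
`gcd(d₁,d₂,d₃) = 1`, `3 ≤ d₁`, `d₃ ≤ d₁d₂ - d₁ - d₂`, and no generator lies in the
submonoid generated by the other two. -/
def MinGen3 (d₁ d₂ d₃ : ℕ) : Prop :=
  3 ≤ d₁ ∧ d₁ < d₂ ∧ d₂ < d₃ ∧ d₃ + d₁ + d₂ ≤ d₁ * d₂ ∧
    Nat.gcd d₁ (Nat.gcd d₂ d₃) = 1 ∧
    d₁ ∉ gen2 d₂ d₃ ∧ d₂ ∉ gen2 d₁ d₃ ∧ d₃ ∉ gen2 d₁ d₂

/-- The `r`-th gap power sum (higher genus) `G_r = Σ_{s gap} s^r`. -/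
noncomputable def gapPowerSum (S : Set ℕ) (r : ℕ) : ℕ := ∑ᶠ s ∈ (Sᶜ : Set ℕ), s ^ r

namespace Davison

def val (b c : ℕ) (p : ℕ × ℕ) : ℕ := p.1 * b + p.2 * c

def VS (a b c r : ℕ) : Set ℕ := {v | (∃ p : ℕ × ℕ, val b c p = v) ∧ v % a = r % a}

/-- Surjectivity with a small witness. -/
lemma exists_small (a b c : ℕ) (ha : 0 < a) (hg : Nat.gcd a (Nat.gcd b c) = 1) (r : ℕ) :
    ∃ v ∈ VS a b c r, v ≤ (a - 1) * (b + c) := by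
  set d := Nat.gcd b c with hd
  have h1 : (1 : ℤ) = a * Nat.gcdA a d + d * Nat.gcdB a d := by
    have := Nat.gcd_eq_gcd_ab a d
    rw [hg] at this; exact_mod_cast this
  have h2 : (d : ℤ) = b * Nat.gcdA b c + c * Nat.gcdB b c := by
    exact_mod_cast Nat.gcd_eq_gcd_ab b c
  set U : ℤ := Nat.gcdA b c * Nat.gcdB a d * r with hU
  set V : ℤ := Nat.gcdB b c * Nat.gcdB a d * r with hV
  set X : ℤ := Nat.gcdA a d * r with hX
  have hr : (r : ℤ) = a * X + b * U + c * V := by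
    rw [hU, hV, hX]
    linear_combination (r : ℤ) * h1 + ((Nat.gcdB a d : ℤ) * r) * h2
  have haz : (0 : ℤ) < (a : ℤ) := by exact_mod_cast ha
  set β : ℕ := (U % a).toNat with hβ
  set γ : ℕ := (V % a).toNat with hγ
  have hβz : (β : ℤ) = U % a := Int.toNat_of_nonneg (Int.emod_nonneg U (by omega))
  have hγz : (γ : ℤ) = V % a := Int.toNat_of_nonneg (Int.emod_nonneg V (by omega))
  have hβlt : β < a := by
    have := Int.emod_lt_of_pos U haz
    have : (β : ℤ) < (a : ℤ) := by rw [hβz]; exact this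
    exact_mod_cast this
  have hγlt : γ < a := by
    have := Int.emod_lt_of_pos V haz
    have : (γ : ℤ) < (a : ℤ) := by rw [hγz]; exact this
    exact_mod_cast this
  refine ⟨β * b + γ * c, ⟨⟨(β, γ), rfl⟩, ?_⟩, ?_⟩
  · -- (β*b+γ*c) % a = r % a
    have hdvd : (a : ℤ) ∣ (r : ℤ) - (β * b + γ * c : ℕ) := by
      push_cast
      have e1 : (β : ℤ) = U - a * (U / a) := by rw [hβz, Int.emod_def]
      have e2 : (γ : ℤ) = V - a * (V / a) := by rw [hγz, Int.emod_def]
      rw [e1, e2]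
      refine ⟨X + b * (U / a) + c * (V / a), by linear_combination hr⟩
    exact Nat.modEq_iff_dvd.mpr hdvd
  · have : β * b + γ * c ≤ (a-1) * b + (a-1) * c := by
      have := Nat.mul_le_mul_right b (by omega : β ≤ a - 1)
      have := Nat.mul_le_mul_right c (by omega : γ ≤ a - 1)
      omega
    nlinarith [this]

end Davison

namespace Davison

noncomputable def mv (a b c r : ℕ) : ℕ := sInf (VS a b c r)

noncomputable def Bf (a b c r : ℕ) : ℕ := sInf {β : ℕ | ∃ γ, val b c (β, γ) = mv a b c r}

noncomputable def Gf (a b c r : ℕ) : ℕ := sInf {γ : ℕ | val b c (Bf a b c r, γ) = mv a b c r}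

noncomputable def rp (a b c r : ℕ) : ℕ × ℕ := (Bf a b c r, Gf a b c r)

def Can (a b c : ℕ) (p : ℕ × ℕ) : Prop := rp a b c (val b c p % a) = p

variable {a b c : ℕ}

lemma VS_nonempty (ha : 0 < a) (hg : Nat.gcd a (Nat.gcd b c) = 1) (r : ℕ) :
    (VS a b c r).Nonempty := by
  obtain ⟨v, hv, -⟩ := exists_small a b c ha hg r; exact ⟨v, hv⟩

lemma mv_mem (ha : 0 < a) (hg : Nat.gcd a (Nat.gcd b c) = 1) (r : ℕ) :
    mv a b c r ∈ VS a b c r := Nat.sInf_mem (VS_nonempty ha hg r)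

lemma mv_le {r v : ℕ} (hv : v ∈ VS a b c r) : mv a b c r ≤ v := Nat.sInf_le hv

lemma mv_small (ha : 0 < a) (hg : Nat.gcd a (Nat.gcd b c) = 1) (r : ℕ) :
    mv a b c r ≤ (a - 1) * (b + c) := by
  obtain ⟨v, hv, hvs⟩ := exists_small a b c ha hg r
  exact le_trans (Nat.sInf_le hv) hvs

lemma mv_mod (ha : 0 < a) (hg : Nat.gcd a (Nat.gcd b c) = 1) (r : ℕ) :
    mv a b c r % a = r % a := (mv_mem ha hg r).2

lemma val_rp (ha : 0 < a) (hg : Nat.gcd a (Nat.gcd b c) = 1) (r : ℕ) :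
    val b c (rp a b c r) = mv a b c r := by
  obtain ⟨⟨p, hp⟩, -⟩ := mv_mem ha hg r
  have hB : ∃ γ, val b c (Bf a b c r, γ) = mv a b c r :=
    Nat.sInf_mem (⟨p.1, ⟨p.2, by simpa [val] using hp⟩⟩ :
      Set.Nonempty {β : ℕ | ∃ γ, val b c (β, γ) = mv a b c r})
  exact Nat.sInf_mem hB

lemma Bf_le {r : ℕ} {p : ℕ × ℕ} (hp : val b c p = mv a b c r) : Bf a b c r ≤ p.1 :=
  Nat.sInf_le ⟨p.2, by simpa [val] using hp⟩

lemma eq_rp_of (ha : 0 < a) (hc : 0 < c) (hg : Nat.gcd a (Nat.gcd b c) = 1)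
    {r : ℕ} {p : ℕ × ℕ} (hp : val b c p = mv a b c r)
    (h1 : p.1 = Bf a b c r) : p = rp a b c r := by
  have hv : val b c (rp a b c r) = mv a b c r := val_rp ha hg r
  have hp' : Bf a b c r * b + p.2 * c = mv a b c r := by
    rw [← h1]; simpa [val] using hp
  have : p.2 * c = Gf a b c r * c := by
    simp only [val, rp] at hv
    omega
  exact Prod.ext h1 (Nat.eq_of_mul_eq_mul_right hc this)

lemma VS_mod (r : ℕ) : VS a b c (r % a) = VS a b c r := by
  unfold VS
  have : ∀ v : ℕ, (v % a = r % a % a) = (v % a = r % a) := by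
    intro v; rw [Nat.mod_mod_of_dvd _ (dvd_refl a)]
  simp only [this]

lemma mv_mod_eq (r : ℕ) : mv a b c (r % a) = mv a b c r := by
  unfold mv; rw [VS_mod]

lemma Bf_mod (r : ℕ) : Bf a b c (r % a) = Bf a b c r := by
  unfold Bf; rw [mv_mod_eq]

lemma rp_mod (r : ℕ) : rp a b c (r % a) = rp a b c r := by
  unfold rp Gf
  rw [mv_mod_eq, Bf_mod]

lemma can_rp (ha : 0 < a) (hg : Nat.gcd a (Nat.gcd b c) = 1) (r : ℕ) :
    Can a b c (rp a b c r) := by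
  unfold Can
  rw [val_rp ha hg r, mv_mod ha hg r, rp_mod]

lemma can_val (ha : 0 < a) (hg : Nat.gcd a (Nat.gcd b c) = 1)
    {p : ℕ × ℕ} (hp : Can a b c p) :
    val b c p = mv a b c (val b c p % a) := by
  conv_lhs => rw [← hp]
  rw [val_rp ha hg]

lemma can_uniq {p q : ℕ × ℕ} (hp : Can a b c p) (hq : Can a b c q)
    (h : val b c p % a = val b c q % a) : p = q := by
  rw [← hp, ← hq, h]

lemma val_mem_VS (q : ℕ × ℕ) : val b c q ∈ VS a b c (val b c q % a) :=
  ⟨⟨q, rfl⟩, (Nat.mod_mod_of_dvd _ (dvd_refl a)).symm⟩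

end Davison

namespace Davison

variable {a b c : ℕ}

/-- Downward closure of the set of canonical (minimal) representatives. -/
lemma can_dc (ha : 0 < a) (hc : 0 < c) (hg : Nat.gcd a (Nat.gcd b c) = 1)
    {p1 p2 q1 q2 : ℕ} (hp : Can a b c (p1, p2)) (h1 : q1 ≤ p1) (h2 : q2 ≤ p2) :
    Can a b c (q1, q2) := by
  obtain ⟨B1, hB1⟩ : ∃ B1, p1 = q1 + B1 := ⟨p1 - q1, by omega⟩
  obtain ⟨B2, hB2⟩ : ∃ B2, p2 = q2 + B2 := ⟨p2 - q2, by omega⟩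
  subst hB1; subst hB2
  set r' := val b c (q1, q2) % a with hr'
  have hwc : Can a b c (rp a b c r') := can_rp ha hg r'
  have hwval : val b c (rp a b c r') = mv a b c r' := val_rp ha hg r'
  have hwmod : val b c (rp a b c r') % a = val b c (q1, q2) % a := by
    rw [hwval, hr', mv_mod ha hg]
    exact Nat.mod_mod_of_dvd _ (dvd_refl a)
  have hle : mv a b c r' ≤ val b c (q1, q2) := mv_le (val_mem_VS _)
  obtain ⟨w1, w2, hw⟩ : ∃ w1 w2, rp a b c r' = (w1, w2) := ⟨_, _, rfl⟩
  rw [hw] at hwc hwval hwmod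
  set w' : ℕ × ℕ := (w1 + B1, w2 + B2) with hw'
  have hkey : val b c w' + val b c (q1, q2) = val b c (w1, w2) + val b c (q1 + B1, q2 + B2) := by
    simp only [val, hw']; ring
  have hmodw' : val b c w' % a = val b c (q1 + B1, q2 + B2) % a := by
    have hme : val b c w' + val b c (q1, q2) ≡ val b c (q1 + B1, q2 + B2) + val b c (w1, w2) [MOD a] := by
      rw [hkey]; exact Nat.ModEq.refl _ |>.trans (by rw [Nat.add_comm])
    have hqw : val b c (q1, q2) ≡ val b c (w1, w2) [MOD a] := hwmod.symm
    exact Nat.ModEq.add_right_cancel hqw hme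
  -- minimality at class of p
  have hpval : val b c (q1 + B1, q2 + B2) = mv a b c (val b c (q1 + B1, q2 + B2) % a) :=
    can_val ha hg hp
  have hple : val b c (q1 + B1, q2 + B2) ≤ val b c w' := by
    rw [hpval]
    exact mv_le (by rw [← hmodw']; exact val_mem_VS _)
  have hwge : val b c (q1, q2) ≤ val b c (w1, w2) := by omega
  have hweq : val b c (w1, w2) = val b c (q1, q2) := le_antisymm (hwval ▸ hle) hwge
  have hw'eq : val b c w' = val b c (q1 + B1, q2 + B2) := by omega
  -- first coordinates
  have hBfw : w1 = Bf a b c r' := by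
    have := congrArg Prod.fst hw; simpa [rp] using this.symm
  have hBfle : Bf a b c r' ≤ q1 :=
    Bf_le (p := (q1, q2)) (by rw [← hweq]; exact hwval)
  have hpBf : q1 + B1 ≤ w1 + B1 := by
    have heq1 : (q1 + B1 : ℕ) = Bf a b c (val b c (q1 + B1, q2 + B2) % a) := by
      have h' := hp; unfold Can rp at h'
      exact (congrArg Prod.fst h').symm
    have hble := Bf_le (p := w') (r := val b c (q1 + B1, q2 + B2) % a)
      (by rw [hw'eq]; exact hpval)
    rw [← heq1] at hble
    simpa [hw'] using hble
  have hq1 : w1 = q1 := by omega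
  have hfin : (q1, q2) = rp a b c r' := by
    apply eq_rp_of ha hc hg
    · rw [← hweq]; exact hwval
    · rw [← hBfw, hq1]
  unfold Can
  rw [← hr']
  exact hfin.symm

end Davison

namespace Davison

variable {a b c : ℕ}

/-- Corner lemma: an "inner corner" of the complement of the canonical staircase
is congruent to 0 mod `a`. -/
lemma corner (ha : 0 < a) (hb : 0 < b) (hc : 0 < c) (hg : Nat.gcd a (Nat.gcd b c) = 1)
    {z1 z2 : ℕ} (h1 : 1 ≤ z1) (h2 : 1 ≤ z2)
    (hl : Can a b c (z1 - 1, z2)) (hd : Can a b c (z1, z2 - 1))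
    (hz : ¬ Can a b c (z1, z2)) :
    val b c (z1, z2) % a = 0 := by
  set r := val b c (z1, z2) % a with hr
  have hDc : Can a b c (rp a b c r) := can_rp ha hg r
  have hDval : val b c (rp a b c r) = mv a b c r := val_rp ha hg r
  have hDne : rp a b c r ≠ (z1, z2) := fun h => hz (by unfold Can; rw [← hr, h])
  obtain ⟨D1, D2, hD⟩ : ∃ D1 D2, rp a b c r = (D1, D2) := ⟨_, _, rfl⟩
  rw [hD] at hDc hDval hDne
  have hDmod : val b c (D1, D2) % a = val b c (z1, z2) % a := by
    rw [hDval, hr, mv_mod ha hg]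
    exact Nat.mod_mod_of_dvd _ (dvd_refl a)
  have hD1 : D1 = 0 := by
    by_contra hne
    have hD1' : 1 ≤ D1 := by omega
    have hcl : Can a b c (D1 - 1, D2) := can_dc ha hc hg hDc (by omega) le_rfl
    have hmb : val b c (D1 - 1, D2) % a = val b c (z1 - 1, z2) % a := by
      have e1 : val b c (D1 - 1, D2) + b = val b c (D1, D2) := by
        simp only [val]; have h' := Nat.sub_one_mul D1 b
        have h'' : b ≤ D1 * b := Nat.le_mul_of_pos_left b hD1'
        have : (D1 - 1) * b + b = D1 * b := by omega
        omega
      have e2 : val b c (z1 - 1, z2) + b = val b c (z1, z2) := by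
        simp only [val]; have h' := Nat.sub_one_mul z1 b
        have h'' : b ≤ z1 * b := Nat.le_mul_of_pos_left b h1
        have : (z1 - 1) * b + b = z1 * b := by omega
        omega
      have : val b c (D1 - 1, D2) + b ≡ val b c (z1 - 1, z2) + b [MOD a] := by
        rw [e1, e2]; exact hDmod
      exact Nat.ModEq.add_right_cancel' b this
    have := can_uniq hcl hl hmb
    have : D1 - 1 = z1 - 1 ∧ D2 = z2 := by
      constructor
      · exact congrArg Prod.fst this
      · exact congrArg Prod.snd this
    exact hDne (by rw [Prod.ext_iff]; constructor <;> simp <;> omega)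
  have hD2 : D2 = 0 := by
    by_contra hne
    have hD2' : 1 ≤ D2 := by omega
    have hcl : Can a b c (D1, D2 - 1) := can_dc ha hc hg hDc le_rfl (by omega)
    have hmb : val b c (D1, D2 - 1) % a = val b c (z1, z2 - 1) % a := by
      have e1 : val b c (D1, D2 - 1) + c = val b c (D1, D2) := by
        simp only [val]; have h' := Nat.sub_one_mul D2 c
        have h'' : c ≤ D2 * c := Nat.le_mul_of_pos_left c hD2'
        have : (D2 - 1) * c + c = D2 * c := by omega
        omega
      have e2 : val b c (z1, z2 - 1) + c = val b c (z1, z2) := by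
        simp only [val]; have h' := Nat.sub_one_mul z2 c
        have h'' : c ≤ z2 * c := Nat.le_mul_of_pos_left c h2
        have : (z2 - 1) * c + c = z2 * c := by omega
        omega
      have : val b c (D1, D2 - 1) + c ≡ val b c (z1, z2 - 1) + c [MOD a] := by
        rw [e1, e2]; exact hDmod
      exact Nat.ModEq.add_right_cancel' c this
    have := can_uniq hcl hd hmb
    have h12 : D1 = z1 ∧ D2 - 1 = z2 - 1 := by
      constructor
      · exact congrArg Prod.fst this
      · exact congrArg Prod.snd this
    exact hDne (by rw [Prod.ext_iff]; constructor <;> simp <;> omega)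
  have hv0 : val b c (D1, D2) = 0 := by rw [hD1, hD2]; simp [val]
  show val b c (z1, z2) % a = 0
  rw [← hDmod, hv0, Nat.zero_mod]

end Davison

namespace Davison

noncomputable def tp (a b c x : ℕ) : ℕ := sSup {γ | Can a b c (x, γ)}
noncomputable def bstar (a b c : ℕ) : ℕ := sSup {x | Can a b c (x, 0)}
noncomputable def gstar (a b c : ℕ) : ℕ := tp a b c 0
noncomputable def wstar (a b c : ℕ) : ℕ := sSup {x | Can a b c (x, gstar a b c)}

variable {a b c : ℕ}

lemma can_snd_le (ha : 0 < a) (hc : 0 < c) (hg : Nat.gcd a (Nat.gcd b c) = 1)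
    {p : ℕ × ℕ} (hp : Can a b c p) : p.2 ≤ (a - 1) * (b + c) := by
  have h1 : p.2 * c ≤ val b c p := by simp only [val]; omega
  have h2 : p.2 ≤ p.2 * c := Nat.le_mul_of_pos_right p.2 hc
  have h3 : val b c p ≤ (a - 1) * (b + c) := by
    rw [can_val ha hg hp]; exact mv_small ha hg _
  omega

lemma can_fst_le (ha : 0 < a) (hb : 0 < b) (hg : Nat.gcd a (Nat.gcd b c) = 1)
    {p : ℕ × ℕ} (hp : Can a b c p) : p.1 ≤ (a - 1) * (b + c) := by
  have h1 : p.1 * b ≤ val b c p := by simp only [val]; omega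
  have h2 : p.1 ≤ p.1 * b := Nat.le_mul_of_pos_right p.1 hb
  have h3 : val b c p ≤ (a - 1) * (b + c) := by
    rw [can_val ha hg hp]; exact mv_small ha hg _
  omega

lemma bdd_col (ha : 0 < a) (hc : 0 < c) (hg : Nat.gcd a (Nat.gcd b c) = 1) (x : ℕ) :
    BddAbove {γ | Can a b c (x, γ)} :=
  ⟨(a - 1) * (b + c), fun γ h => by simpa using can_snd_le ha hc hg (p := (x, γ)) h⟩

lemma can00 (ha : 0 < a) (hb : 0 < b) (hc : 0 < c) (hg : Nat.gcd a (Nat.gcd b c) = 1) :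
    Can a b c (0, 0) := by
  have hv : val b c ((0 : ℕ), (0 : ℕ)) = 0 := by simp [val]
  have hm : mv a b c 0 = 0 :=
    Nat.le_zero.mp (mv_le ⟨⟨(0, 0), hv⟩, rfl⟩)
  have hB : Bf a b c 0 = 0 := Nat.le_zero.mp (Bf_le (p := ((0:ℕ), (0:ℕ))) (by rw [hv, hm]))
  have : ((0 : ℕ), (0 : ℕ)) = rp a b c 0 :=
    eq_rp_of ha hc hg (by rw [hv, hm]) (by simpa using hB.symm)
  have h := can_rp ha hg (a := a) (b := b) (c := c) 0
  rwa [← this] at h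

lemma tp_mem (ha : 0 < a) (hc : 0 < c) (hg : Nat.gcd a (Nat.gcd b c) = 1)
    {x : ℕ} (hx : ∃ γ, Can a b c (x, γ)) : Can a b c (x, tp a b c x) :=
  Nat.sSup_mem hx (bdd_col ha hc hg x)

lemma le_tp (ha : 0 < a) (hc : 0 < c) (hg : Nat.gcd a (Nat.gcd b c) = 1)
    {x γ : ℕ} (h : Can a b c (x, γ)) : γ ≤ tp a b c x :=
  le_csSup (bdd_col ha hc hg x) h

lemma can_bstar (ha : 0 < a) (hb : 0 < b) (hc : 0 < c) (hg : Nat.gcd a (Nat.gcd b c) = 1) :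
    Can a b c (bstar a b c, 0) := by
  have h := Nat.sSup_mem (s := {x | Can a b c (x, 0)}) ⟨0, can00 ha hb hc hg⟩
    ⟨(a - 1) * (b + c), fun x h => by simpa using can_fst_le ha hb hg (p := (x, 0)) h⟩
  exact h

lemma le_bstar (ha : 0 < a) (hb : 0 < b) (hc : 0 < c) (hg : Nat.gcd a (Nat.gcd b c) = 1)
    {p : ℕ × ℕ} (hp : Can a b c p) : p.1 ≤ bstar a b c := by
  have : Can a b c (p.1, 0) := by
    obtain ⟨p1, p2⟩ := p
    exact can_dc ha hc hg hp le_rfl (Nat.zero_le _)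
  exact le_csSup ⟨(a - 1) * (b + c), fun x h => by simpa using can_fst_le ha hb hg (p := (x, 0)) h⟩ this

lemma col_ne (ha : 0 < a) (hb : 0 < b) (hc : 0 < c) (hg : Nat.gcd a (Nat.gcd b c) = 1)
    {x : ℕ} (hx : x ≤ bstar a b c) : ∃ γ, Can a b c (x, γ) :=
  ⟨0, can_dc ha hc hg (can_bstar ha hb hc hg) hx le_rfl⟩

lemma tp_mono (ha : 0 < a) (hc : 0 < c) (hg : Nat.gcd a (Nat.gcd b c) = 1)
    {x y : ℕ} (hxy : x ≤ y) (hy : ∃ γ, Can a b c (y, γ)) :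
    tp a b c y ≤ tp a b c x := by
  have := tp_mem ha hc hg hy
  exact le_tp ha hc hg (can_dc ha hc hg this hxy le_rfl)

lemma can_gstar (ha : 0 < a) (hb : 0 < b) (hc : 0 < c) (hg : Nat.gcd a (Nat.gcd b c) = 1) :
    Can a b c (0, gstar a b c) := tp_mem ha hc hg ⟨0, can00 ha hb hc hg⟩

lemma can_P1 (ha : 0 < a) (hb : 0 < b) (hc : 0 < c) (hg : Nat.gcd a (Nat.gcd b c) = 1) :
    Can a b c (wstar a b c, gstar a b c) := by
  have h := Nat.sSup_mem (s := {x | Can a b c (x, gstar a b c)}) ⟨0, can_gstar ha hb hc hg⟩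
    ⟨(a - 1) * (b + c), fun x h => by simpa using can_fst_le ha hb hg (p := (x, gstar a b c)) h⟩
  exact h

lemma le_wstar (ha : 0 < a) (hb : 0 < b) (hg : Nat.gcd a (Nat.gcd b c) = 1)
    {x : ℕ} (h : Can a b c (x, gstar a b c)) : x ≤ wstar a b c :=
  le_csSup ⟨(a - 1) * (b + c), fun y hy => by simpa using can_fst_le ha hb hg (p := (y, gstar a b c)) hy⟩ h

lemma can_P2 (ha : 0 < a) (hb : 0 < b) (hc : 0 < c) (hg : Nat.gcd a (Nat.gcd b c) = 1) :
    Can a b c (bstar a b c, tp a b c (bstar a b c)) :=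
  tp_mem ha hc hg ⟨0, can_bstar ha hb hc hg⟩

lemma tp_le_gstar (ha : 0 < a) (hc : 0 < c) (hg : Nat.gcd a (Nat.gcd b c) = 1)
    {x : ℕ} (hx : ∃ γ, Can a b c (x, γ)) : tp a b c x ≤ gstar a b c :=
  tp_mono ha hc hg (Nat.zero_le x) hx

end Davison

namespace Davison

variable {a b c : ℕ}

/-- The canonical staircase is an L-shape: every canonical point is dominated by
one of the two corner points. -/
theorem cover (ha : 0 < a) (hb : 0 < b) (hc : 0 < c) (hg : Nat.gcd a (Nat.gcd b c) = 1)
    {q1 q2 : ℕ} (hq : Can a b c (q1, q2)) :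
    (q1 ≤ wstar a b c ∧ q2 ≤ gstar a b c) ∨
      (q1 ≤ bstar a b c ∧ q2 ≤ tp a b c (bstar a b c)) := by
  by_contra hcon
  push_neg at hcon
  have hq1b : q1 ≤ bstar a b c := le_bstar ha hb hc hg hq
  have hq2g : q2 ≤ gstar a b c := by
    have h1 : q2 ≤ tp a b c q1 := le_tp ha hc hg hq
    have h2 : tp a b c q1 ≤ gstar a b c := tp_le_gstar ha hc hg ⟨q2, hq⟩
    omega
  have hw : wstar a b c < q1 := by
    rcases Nat.lt_or_ge (wstar a b c) q1 with h | h
    · exact h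
    · exact absurd (hcon.1 h) (by omega)
  have ht : tp a b c (bstar a b c) < q2 := by
    rcases Nat.lt_or_ge (tp a b c (bstar a b c)) q2 with h | h
    · exact h
    · exact absurd (hcon.2 hq1b) (by omega)
  -- first drop: least x with tp x < gstar
  have hq1mem : tp a b c q1 < gstar a b c := by
    have hle : tp a b c q1 ≤ gstar a b c := tp_le_gstar ha hc hg ⟨q2, hq⟩
    rcases Nat.lt_or_ge (tp a b c q1) (gstar a b c) with h | h
    · exact h
    · exfalso
      have heq : tp a b c q1 = gstar a b c := by omega
      have : Can a b c (q1, gstar a b c) := by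
        rw [← heq]; exact tp_mem ha hc hg ⟨q2, hq⟩
      have := le_wstar ha hb hg this
      omega
  set S1 : Set ℕ := {x | tp a b c x < gstar a b c} with hS1
  set x' := sInf S1 with hx'
  have hx'mem : tp a b c x' < gstar a b c := Nat.sInf_mem (⟨q1, hq1mem⟩ : S1.Nonempty)
  have hx'le : x' ≤ q1 := Nat.sInf_le hq1mem
  have hx'pos : 1 ≤ x' := by
    rcases Nat.eq_zero_or_pos x' with h | h
    · exfalso; rw [h] at hx'mem; exact absurd hx'mem (by unfold gstar; omega)
    · exact h
  have hx'prev : gstar a b c ≤ tp a b c (x' - 1) := by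
    have hnm : x' - 1 ∉ S1 := Nat.notMem_of_lt_sInf (by omega)
    have : ¬ (tp a b c (x' - 1) < gstar a b c) := hnm
    omega
  -- second drop: least x with tp x ≤ tp bstar
  set S2 : Set ℕ := {x | tp a b c x ≤ tp a b c (bstar a b c)} with hS2
  set x'' := sInf S2 with hx''
  have hx''mem : tp a b c x'' ≤ tp a b c (bstar a b c) := Nat.sInf_mem (⟨bstar a b c, (le_rfl : tp a b c (bstar a b c) ≤ _)⟩ : S2.Nonempty)
  have hx''le : x'' ≤ bstar a b c := Nat.sInf_le (le_rfl : tp a b c (bstar a b c) ≤ _)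
  have hq1x'' : q1 < x'' := by
    rcases Nat.lt_or_ge q1 x'' with h | h
    · exact h
    · exfalso
      have hmono : tp a b c q1 ≤ tp a b c x'' := by
        -- x'' ≤ q1
        exact tp_mono ha hc hg h ⟨q2, hq⟩
      have hq2tp : q2 ≤ tp a b c q1 := le_tp ha hc hg hq
      omega
  have hx''pos : 1 ≤ x'' := by omega
  have hx''prev : tp a b c (bstar a b c) < tp a b c (x'' - 1) := by
    have hnm : x'' - 1 ∉ S2 := Nat.notMem_of_lt_sInf (by omega)
    have : ¬ (tp a b c (x'' - 1) ≤ tp a b c (bstar a b c)) := hnm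
    omega
  -- both columns involved are nonempty
  have hcol : ∀ x, x ≤ bstar a b c → ∃ γ, Can a b c (x, γ) := fun x hx => col_ne ha hb hc hg hx
  have hx'col : ∃ γ, Can a b c (x', γ) := hcol x' (by omega)
  have hx'1col : ∃ γ, Can a b c (x' - 1, γ) := hcol (x' - 1) (by omega)
  have hx''col : ∃ γ, Can a b c (x'', γ) := hcol x'' (by omega)
  have hx''1col : ∃ γ, Can a b c (x'' - 1, γ) := hcol (x'' - 1) (by omega)
  -- drops
  have hdrop1 : tp a b c x' < tp a b c (x' - 1) := by
    have := tp_le_gstar ha hc hg hx'1col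
    omega
  have hdrop2 : tp a b c x'' < tp a b c (x'' - 1) := by omega
  -- corner 1
  have hcor1 : val b c (x', tp a b c x' + 1) % a = 0 := by
    apply corner ha hb hc hg hx'pos (by omega)
    · exact can_dc ha hc hg (tp_mem ha hc hg hx'1col) le_rfl (by omega)
    · simpa using tp_mem ha hc hg hx'col
    · intro hcan
      have := le_tp ha hc hg hcan
      omega
  have hcor2 : val b c (x'', tp a b c x'' + 1) % a = 0 := by
    apply corner ha hb hc hg hx''pos (by omega)
    · exact can_dc ha hc hg (tp_mem ha hc hg hx''1col) le_rfl (by omega)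
    · simpa using tp_mem ha hc hg hx''col
    · intro hcan
      have := le_tp ha hc hg hcan
      omega
  -- the two column tops are canonical and congruent mod a: contradiction
  have hE1 : Can a b c (x', tp a b c x') := tp_mem ha hc hg hx'col
  have hE2 : Can a b c (x'', tp a b c x'') := tp_mem ha hc hg hx''col
  have hval1 : val b c (x', tp a b c x') + c = val b c (x', tp a b c x' + 1) := by
    simp only [val]; ring
  have hval2 : val b c (x'', tp a b c x'') + c = val b c (x'', tp a b c x'' + 1) := by
    simp only [val]; ring
  have hmodeq : val b c (x', tp a b c x') % a = val b c (x'', tp a b c x'') % a := by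
    have h1 : (val b c (x', tp a b c x') + c) % a = (val b c (x'', tp a b c x'') + c) % a := by
      rw [hval1, hval2, hcor1, hcor2]
    exact Nat.ModEq.add_right_cancel' c h1
  have := can_uniq hE1 hE2 hmodeq
  have : x' = x'' := congrArg Prod.fst this
  omega

end Davison

namespace Davison

variable {a b c : ℕ}

/-- Counting: `a` many canonical points fit in the union of two rectangles. -/
theorem count (ha : 0 < a) (hb : 0 < b) (hc : 0 < c) (hg : Nat.gcd a (Nat.gcd b c) = 1) :
    a + (wstar a b c + 1) * (tp a b c (bstar a b c) + 1) ≤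
      (wstar a b c + 1) * (gstar a b c + 1) +
      (bstar a b c + 1) * (tp a b c (bstar a b c) + 1) := by
  classical
  set w := wstar a b c
  set g' := gstar a b c
  set β := bstar a b c
  set t := tp a b c (bstar a b c)
  set T : Finset (ℕ × ℕ) := (Finset.range a).image (rp a b c) with hT
  have hcard : T.card = a := by
    rw [hT, Finset.card_image_of_injOn, Finset.card_range]
    intro r hr r' hr' hrr
    simp only [Finset.mem_coe, Finset.mem_range] at hr hr'
    have e1 : r = val b c (rp a b c r) % a := by
      rw [val_rp ha hg, mv_mod ha hg, Nat.mod_eq_of_lt hr]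
    have e2 : r' = val b c (rp a b c r') % a := by
      rw [val_rp ha hg, mv_mod ha hg, Nat.mod_eq_of_lt hr']
    rw [e1, e2, hrr]
  set R1 : Finset (ℕ × ℕ) := Finset.range (w + 1) ×ˢ Finset.range (g' + 1) with hR1
  set R2 : Finset (ℕ × ℕ) := Finset.range (β + 1) ×ˢ Finset.range (t + 1) with hR2
  set Ri : Finset (ℕ × ℕ) := Finset.range (w + 1) ×ˢ Finset.range (t + 1) with hRi
  have hsub : T ⊆ R1 ∪ R2 := by
    intro p hp
    obtain ⟨r, -, hr⟩ := Finset.mem_image.mp hp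
    have hcan : Can a b c p := by rw [← hr]; exact can_rp ha hg r
    obtain ⟨p1, p2⟩ := p
    rcases cover ha hb hc hg hcan with ⟨h1, h2⟩ | ⟨h1, h2⟩
    · exact Finset.mem_union_left _ (by simp [hR1, Finset.mem_product]; omega)
    · exact Finset.mem_union_right _ (by simp [hR2, Finset.mem_product]; omega)
  have hwβ : w ≤ β := le_bstar ha hb hc hg (can_P1 ha hb hc hg)
  have htg : t ≤ g' := tp_le_gstar ha hc hg ⟨0, can_bstar ha hb hc hg⟩
  have hisub : Ri ⊆ R1 ∩ R2 := by
    intro p hp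
    simp only [hRi, Finset.mem_product, Finset.mem_range] at hp
    rw [Finset.mem_inter]
    constructor
    · simp [hR1, Finset.mem_product]; omega
    · simp [hR2, Finset.mem_product]; omega
  have h1 : a ≤ (R1 ∪ R2).card := by
    rw [← hcard]; exact Finset.card_le_card hsub
  have h2 : (R1 ∪ R2).card + (R1 ∩ R2).card = R1.card + R2.card :=
    Finset.card_union_add_card_inter R1 R2
  have h3 : Ri.card ≤ (R1 ∩ R2).card := Finset.card_le_card hisub
  have e1 : R1.card = (w + 1) * (g' + 1) := by simp [hR1]
  have e2 : R2.card = (β + 1) * (t + 1) := by simp [hR2]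
  have e3 : Ri.card = (w + 1) * (t + 1) := by simp [hRi]
  omega

/-- If the minimum of the class of `n` is at most `n`, then `n` is in the semigroup. -/
lemma mem_of_mv_le (ha : 0 < a) (hg : Nat.gcd a (Nat.gcd b c) = 1)
    {n : ℕ} (h : mv a b c n ≤ n) : n ∈ gen3 a b c := by
  have hmod : mv a b c n % a = n % a := mv_mod ha hg n
  have hdvd : a ∣ n - mv a b c n := (Nat.modEq_iff_dvd' h).mp hmod
  obtain ⟨k, hk⟩ := hdvd
  have hn : n = a * k + mv a b c n := Nat.eq_add_of_sub_eq h hk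
  obtain ⟨⟨p, hp⟩, -⟩ := mv_mem ha hg n
  refine ⟨k, p.1, p.2, ?_⟩
  rw [hn, ← hp]
  simp only [val]; ring

lemma gap_bound (ha : 0 < a) (hg : Nat.gcd a (Nat.gcd b c) = 1)
    {n : ℕ} (h : n ∉ gen3 a b c) : n ≤ (a - 1) * (b + c) := by
  by_contra hgt
  exact h (mem_of_mv_le ha hg (le_trans (mv_small ha hg n) (by omega)))

lemma bdd_gaps (ha : 0 < a) (hg : Nat.gcd a (Nat.gcd b c) = 1) :
    BddAbove ((gen3 a b c)ᶜ : Set ℕ) :=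
  ⟨(a - 1) * (b + c), fun n hn => gap_bound ha hg hn⟩

/-- A canonical point with value at least `a` gives a gap. -/
lemma gap_can (ha : 0 < a) (hg : Nat.gcd a (Nat.gcd b c) = 1)
    {p : ℕ × ℕ} (hp : Can a b c p) (hle : a ≤ val b c p) :
    (val b c p - a) ∉ gen3 a b c := by
  rintro ⟨α, β, γ, h⟩
  set v' := β * b + γ * c with hv'
  obtain ⟨k, hk⟩ : ∃ k, α * a = k := ⟨_, rfl⟩
  rw [hk] at h
  have hvp : val b c p = v' + (k + a) := by omega
  have hka : val b c p = v' + (α + 1) * a := by rw [hvp, ← hk]; ring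
  have hmod : v' % a = val b c p % a := by
    rw [hka, Nat.add_mul_mod_self_right]
  have hminv : mv a b c (val b c p % a) ≤ v' :=
    mv_le ⟨⟨(β, γ), rfl⟩, by
      rw [Nat.mod_mod_of_dvd _ (dvd_refl a)]
      exact hmod⟩
  have hcv : val b c p = mv a b c (val b c p % a) := can_val ha hg hp
  omega

lemma val_le_F (ha : 0 < a) (hg : Nat.gcd a (Nat.gcd b c) = 1)
    {p : ℕ × ℕ} (hp : Can a b c p) :
    val b c p ≤ frobeniusNum (gen3 a b c) + a := by
  rcases Nat.lt_or_ge (val b c p) a with h | h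
  · omega
  · have hgap := gap_can ha hg hp h
    have hle : val b c p - a ≤ frobeniusNum (gen3 a b c) :=
      le_csSup (bdd_gaps ha hg) hgap
    omega

end Davison

namespace Davison

/-- The two-rectangle inequality. -/
lemma key_ineq (x1 y1 x2 y2 g : ℤ) (hx1 : 1 ≤ x1) (hy2 : 1 ≤ y2)
    (hxx : x1 < x2) (hyy : y2 < y1)
    (h1 : x1 + y1 ≤ g) (h2 : x2 + y2 ≤ g)
    (hstrict : x1 + y1 + 1 ≤ g ∨ x2 + y2 + 1 ≤ g) :
    3 * (x1 * y1 + x2 * y2) < g ^ 2 + 3 * (x1 * y2) := by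
  rcases hstrict with h | h
  · nlinarith [sq_nonneg (x1 - y2), sq_nonneg (x1 - y1 + y2), sq_nonneg (2*y2 - y1),
      mul_nonneg (by linarith : (0:ℤ) ≤ g - x1 - y1 - 1) (by linarith : (0:ℤ) ≤ g - x2 - y2),
      mul_nonneg (by linarith : (0:ℤ) ≤ g - x1 - y1) (by linarith : (0:ℤ) ≤ y2 - 1),
      mul_nonneg (by linarith : (0:ℤ) ≤ g - x2 - y2) (by linarith : (0:ℤ) ≤ y2 - 1),
      mul_nonneg (by linarith : (0:ℤ) ≤ g - x1 - y1) (by linarith : (0:ℤ) ≤ x1 - 1),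
      mul_nonneg (by linarith : (0:ℤ) ≤ g - x1 - y1) (by linarith : (0:ℤ) ≤ y1 - y2 - 1),
      sq_nonneg (g - x1 - y1)]
  · nlinarith [sq_nonneg (y2 - x1), sq_nonneg (y2 - x2 + x1), sq_nonneg (2*x1 - x2),
      mul_nonneg (by linarith : (0:ℤ) ≤ g - x2 - y2 - 1) (by linarith : (0:ℤ) ≤ g - x1 - y1),
      mul_nonneg (by linarith : (0:ℤ) ≤ g - x2 - y2) (by linarith : (0:ℤ) ≤ x1 - 1),
      mul_nonneg (by linarith : (0:ℤ) ≤ g - x1 - y1) (by linarith : (0:ℤ) ≤ x1 - 1),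
      mul_nonneg (by linarith : (0:ℤ) ≤ g - x2 - y2) (by linarith : (0:ℤ) ≤ y2 - 1),
      mul_nonneg (by linarith : (0:ℤ) ≤ g - x2 - y2) (by linarith : (0:ℤ) ≤ x2 - x1 - 1),
      sq_nonneg (g - x2 - y2)]

variable {a b c : ℕ}

set_option maxHeartbeats 4000000 in
theorem key (ha : 0 < a) (hb : 0 < b) (hc : 0 < c) (hg : Nat.gcd a (Nat.gcd b c) = 1) :
    3 * (a * b * c) < (frobeniusNum (gen3 a b c) + (a + b + c)) ^ 2 := by
  set F := frobeniusNum (gen3 a b c) with hF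
  set w := wstar a b c with hw
  set g' := gstar a b c with hg'
  set β := bstar a b c with hβ
  set t := tp a b c (bstar a b c) with ht
  have hcount : a + (w + 1) * (t + 1) ≤ (w + 1) * (g' + 1) + (β + 1) * (t + 1) :=
    count ha hb hc hg
  have hP1F : w * b + g' * c ≤ F + a := val_le_F ha hg (can_P1 ha hb hc hg)
  have hP2F : β * b + t * c ≤ F + a := val_le_F ha hg (can_P2 ha hb hc hg)
  have hwβ : w ≤ β := le_bstar ha hb hc hg (can_P1 ha hb hc hg)
  have htg : t ≤ g' := tp_le_gstar ha hc hg ⟨0, can_bstar ha hb hc hg⟩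
  have hcanP1 : Can a b c (w, g') := can_P1 ha hb hc hg
  have hcanP2 : Can a b c (β, t) := can_P2 ha hb hc hg
  have hlew : ∀ x, Can a b c (x, g') → x ≤ w := fun x h => le_wstar ha hb hg h
  have hletp : ∀ γ, Can a b c (β, γ) → γ ≤ t := fun γ h => le_tp ha hc hg h
  clear_value F w g' β t
  have hbz : (1 : ℤ) ≤ (b : ℤ) := by exact_mod_cast hb
  have hcz : (1 : ℤ) ≤ (c : ℤ) := by exact_mod_cast hc
  zify
  zify at hcount hP1F hP2F
  rcases Nat.lt_or_ge w β with hlt | hge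
  · -- two distinct rectangles
    have htlt : t < g' := by
      rcases Nat.lt_or_ge t g' with h | h
      · exact h
      · exfalso
        have hte : t = g' := by omega
        have hcb : Can a b c (β, g') := by rw [← hte]; exact hcanP2
        have := hlew β hcb
        omega
    have hne : w * b + g' * c ≠ β * b + t * c := by
      intro he
      have hmodeq : val b c (w, g') % a = val b c (β, t) % a := by
        simp only [val]; rw [he]
      have := can_uniq hcanP1 hcanP2 hmodeq
      have : w = β := congrArg Prod.fst this
      omega
    have hsn : w * b + g' * c + 1 ≤ F + a ∨ β * b + t * c + 1 ≤ F + a := by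
      rcases Nat.lt_or_ge (w * b + g' * c) (β * b + t * c) with h | h <;> omega
    have hki := key_ineq (((w:ℤ)+1)*b) (((g':ℤ)+1)*c) (((β:ℤ)+1)*b) (((t:ℤ)+1)*c)
      ((F:ℤ) + a + b + c)
      (by nlinarith [Int.natCast_nonneg w])
      (by nlinarith [Int.natCast_nonneg t])
      (by have : (w:ℤ) + 1 ≤ (β:ℤ) := by exact_mod_cast hlt
          nlinarith [Int.natCast_nonneg β])
      (by have : (t:ℤ) + 1 ≤ (g':ℤ) := by exact_mod_cast htlt
          nlinarith [Int.natCast_nonneg g'])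
      (by push_cast; nlinarith [hP1F])
      (by push_cast; nlinarith [hP2F])
      (by rcases hsn with h | h
          · left; zify at h; nlinarith [h]
          · right; zify at h; nlinarith [h])
    have hcmul : ((a:ℤ) + ((w:ℤ)+1)*((t:ℤ)+1)) * ((b:ℤ)*(c:ℤ)) ≤
        (((w:ℤ)+1)*((g':ℤ)+1) + ((β:ℤ)+1)*((t:ℤ)+1)) * ((b:ℤ)*(c:ℤ)) := by
      have hbc : (0:ℤ) ≤ (b:ℤ)*(c:ℤ) := by positivity
      apply mul_le_mul_of_nonneg_right _ hbc
      push_cast at hcount ⊢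
      linarith [hcount]
    push_cast
    nlinarith [hki, hcmul]
  · -- single rectangle: w = β
    have hweq : w = β := by omega
    have hte : t = g' := by
      have hcb : Can a b c (β, g') := by rw [← hweq]; exact hcanP1
      have := hletp g' hcb
      omega
    rw [hweq, hte] at hcount
    obtain ⟨x, hx⟩ : ∃ x : ℤ, ((β:ℤ)+1)*(b:ℤ) = x := ⟨_, rfl⟩
    obtain ⟨y, hy⟩ : ∃ y : ℤ, ((g':ℤ)+1)*(c:ℤ) = y := ⟨_, rfl⟩
    have hrect : (a : ℤ) ≤ ((β:ℤ)+1) * ((g':ℤ)+1) := by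
      push_cast at hcount; linarith [hcount]
    have habc : (a:ℤ) * ((b:ℤ)*(c:ℤ)) ≤ x * y := by
      rw [← hx, ← hy]
      have hbc : (0:ℤ) ≤ (b:ℤ)*(c:ℤ) := by positivity
      nlinarith [mul_le_mul_of_nonneg_right hrect hbc]
    have hxyG : x + y ≤ (F:ℤ) + a + b + c := by
      rw [← hx, ← hy]
      rw [hte] at hP2F
      nlinarith [hP2F]
    have hx1 : (1:ℤ) ≤ x := by rw [← hx]; nlinarith [Int.natCast_nonneg β]
    have hy1 : (1:ℤ) ≤ y := by rw [← hy]; nlinarith [Int.natCast_nonneg g']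
    have hG0 : (0:ℤ) ≤ (F:ℤ) + a + b + c := by positivity
    have hsq : (x + y)^2 ≤ ((F:ℤ) + a + b + c)^2 := by nlinarith [hxyG, hx1, hy1]
    push_cast
    nlinarith [habc, hsq, sq_nonneg (x - y), hx1, hy1]

end Davison


/-- Davison's lower bound: for `S₃ = ⟨d₁,d₂,d₃⟩` minimally generated,
`g₃ > √(3·π₃)`, i.e. `F₃ > √(3·d₁d₂d₃) − (d₁+d₂+d₃)`. -/
theorem davison_lower_bound (d₁ d₂ d₃ : ℕ) (h : MinGen3 d₁ d₂ d₃) :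
    Real.sqrt (3 * ((d₁ : ℝ) * d₂ * d₃)) - ((d₁ : ℝ) + d₂ + d₃) <
      (frobeniusNum (gen3 d₁ d₂ d₃) : ℝ) := by
  obtain ⟨h3, h12, h23, hsum, hgcd, -, -, -⟩ := h
  have ha : 0 < d₁ := by omega
  have hb : 0 < d₂ := by omega
  have hc : 0 < d₃ := by omega
  have hkey := Davison.key ha hb hc hgcd
  have hpos : (0:ℝ) < (frobeniusNum (gen3 d₁ d₂ d₃) : ℝ) + ((d₁ : ℝ) + d₂ + d₃) := by
    have h1 : (1:ℝ) ≤ (d₁ : ℝ) := by exact_mod_cast ha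
    have h0 : (0:ℝ) ≤ (frobeniusNum (gen3 d₁ d₂ d₃) : ℝ) := by positivity
    have h2 : (0:ℝ) ≤ (d₂ : ℝ) := by positivity
    have h3' : (0:ℝ) ≤ (d₃ : ℝ) := by positivity
    linarith
  have hsq : Real.sqrt (3 * ((d₁ : ℝ) * d₂ * d₃)) <
      (frobeniusNum (gen3 d₁ d₂ d₃) : ℝ) + ((d₁ : ℝ) + d₂ + d₃) := by
    rw [Real.sqrt_lt' hpos]
    have : ((3 * (d₁ * d₂ * d₃) : ℕ) : ℝ) <
        (((frobeniusNum (gen3 d₁ d₂ d₃) + (d₁ + d₂ + d₃)) ^ 2 : ℕ) : ℝ) := by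
      exact_mod_cast hkey
    push_cast at this
    linarith
  linarith
end

section
/- (Wilf's question for embedding dimension three.) Let S₃ = ⟨d₁,d₂,d₃⟩ be any numerical semigroup minimally generated by three positive integers, with genus G₀ and conductor c₃. Then G₀/c₃ ≤ 2/3, i.e. 3·G₀ ≤ 2·c₃. -/
/-!
Every gap `x` of a numerical semigroup `S` lies below a pseudo-Frobenius number `f` with
`f - x ∈ S`, and `x ↦ (f, f - x)` is injective; hence `G₀ ≤ t · n`, where `t` is the number of
pseudo-Frobenius numbers and `n = c - G₀` the number of elements of `S` below the conductor.

For `S = ⟨d₁, d₂, d₃⟩` we show `t ≤ 2`. Write `f + d₁ = b d₂ + c d₃`; the coefficients can be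
taken below the least multiples `B d₂`, `C d₃` occurring in a relation, and distinct
pseudo-Frobenius numbers have incomparable coefficient pairs. For two of them, with `b₁ < b₂`,
the join `b₂ d₂ + c₁ d₃` lies in `d₁ + S`, which yields a relation `k d₁ = e d₂ + f d₃` with
`(e, f)` in the box `(b₁, b₂] × (c₂, c₁]`. Three pseudo-Frobenius numbers `b₁ < b₂ < b₃` give two
such relations, and their difference is a relation smaller than `B` or `C` permits.
-/

def pseudoFrobenius (S : Set ℕ) : Set ℕ := {f | f ∉ S ∧ ∀ s ∈ S, 0 < s → f + s ∈ S}

namespace IsNumericalSemigroup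

variable {S : Set ℕ} (hS : IsNumericalSemigroup S)
include hS

lemma mem_of_conductorNum_le {n : ℕ} (hn : conductorNum S ≤ n) : n ∈ S := by
  obtain ⟨m, hm⟩ := hS.2.2.bddAbove
  have hne : {c | ∀ n, c ≤ n → n ∈ S}.Nonempty :=
    ⟨m + 1, fun n hn => by_contra fun h => by have := hm h; omega⟩
  exact Nat.sInf_mem hne n hn

lemma lt_conductorNum_of_notMem {n : ℕ} (hn : n ∉ S) : n < conductorNum S :=
  lt_of_not_ge fun h => hn (hS.mem_of_conductorNum_le h)

lemma genus_add_ncard_inter_Iio :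
    genus S + (S ∩ Set.Iio (conductorNum S)).ncard = conductorNum S := by
  have hgaps : Set.Iio (conductorNum S) \ S = Sᶜ :=
    Set.sdiff_eq_compl_inter.trans (Set.inter_eq_left.2 fun _ => hS.lt_conductorNum_of_notMem)
  have := Set.ncard_inter_add_ncard_sdiff_eq_ncard (Set.Iio (conductorNum S)) S
    (Set.finite_Iio _)
  rw [hgaps, Set.inter_comm, Set.ncard_Iio_nat] at this
  unfold genus
  omega

lemma exists_add_mem_pseudoFrobenius {x : ℕ} (hx : x ∉ S) :
    ∃ s ∈ S, x + s ∈ pseudoFrobenius S := by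
  set D := {y | y ∉ S ∧ ∃ s ∈ S, x + s = y}
  obtain ⟨f, ⟨hfS, s, hs, rfl⟩, hmax⟩ := Set.exists_max_image D id
    (hS.2.2.subset fun _ hy => hy.1) ⟨x, hx, 0, hS.1, rfl⟩
  refine ⟨s, hs, hfS, fun t ht htpos => by_contra fun hst => ?_⟩
  have := hmax _ ⟨hst, s + t, hS.2.1 _ hs _ ht, by omega⟩
  simp only [id] at this
  omega

lemma genus_le_ncard_pseudoFrobenius_mul :
    genus S ≤ (pseudoFrobenius S).ncard * (S ∩ Set.Iio (conductorNum S)).ncard := by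
  choose! s hs hf using fun x (hx : x ∉ S) => hS.exists_add_mem_pseudoFrobenius hx
  rw [← Set.ncard_prod]
  refine Set.ncard_le_ncard_of_injOn (fun x => (x + s x, s x))
    (fun x hx => ⟨hf x hx, hs x hx, ?_⟩) (fun x _ y _ hxy => ?_)
    ((hS.2.2.subset fun _ h => h.1).prod ((Set.finite_Iio _).inter_of_right _))
  · exact lt_of_le_of_lt (Nat.le_add_left _ _) (hS.lt_conductorNum_of_notMem (hf x hx).1)
  · simp only [Prod.mk.injEq] at hxy
    omega

end IsNumericalSemigroup

lemma isNumericalSemigroup_gen3 {d₁ d₂ d₃ : ℕ} (hgcd : Nat.gcd d₁ (Nat.gcd d₂ d₃) = 1) :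
    IsNumericalSemigroup (gen3 d₁ d₂ d₃) := by
  have hadd : ∀ a ∈ gen3 d₁ d₂ d₃, ∀ b ∈ gen3 d₁ d₂ d₃, a + b ∈ gen3 d₁ d₂ d₃ := by
    rintro _ ⟨a₁, a₂, a₃, rfl⟩ _ ⟨b₁, b₂, b₃, rfl⟩
    exact ⟨a₁ + b₁, a₂ + b₂, a₃ + b₃, by ring⟩
  have hzero : 0 ∈ gen3 d₁ d₂ d₃ := ⟨0, 0, 0, by ring⟩
  refine ⟨hzero, hadd, ?_⟩
  have hclosure : ∀ n ∈ AddSubmonoid.closure {d₁, d₂, d₃}, n ∈ gen3 d₁ d₂ d₃ := by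
    intro n hn
    induction hn using AddSubmonoid.closure_induction with
    | mem n hn =>
      rcases hn with rfl | rfl | rfl
      exacts [⟨1, 0, 0, by ring⟩, ⟨0, 1, 0, by ring⟩, ⟨0, 0, 1, by ring⟩]
    | zero => exact hzero
    | add a b _ _ ha hb => exact hadd a ha b hb
  have hgcd' : Nat.setGcd {d₁, d₂, d₃} ∣ 1 := hgcd ▸ Nat.dvd_gcd
    (Nat.setGcd_dvd_of_mem (by simp)) (Nat.dvd_gcd (Nat.setGcd_dvd_of_mem (by simp))
      (Nat.setGcd_dvd_of_mem (by simp)))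
  obtain ⟨N, hN⟩ := Nat.exists_mem_closure_of_ge {d₁, d₂, d₃}
  refine (Set.finite_Iio N).subset fun n hn => Set.mem_Iio.2 <| lt_of_not_ge fun h => hn ?_
  exact hclosure n (hN n h (hgcd'.trans (one_dvd n)))

section ThreeGenerators

noncomputable def boundB (d₁ d₂ d₃ : ℕ) : ℕ :=
  sInf {b | 0 < b ∧ ∃ u v, b * d₂ = u * d₁ + v * d₃}

/-- Only relations with a positive `d₁`-coefficient count here, so that every representation
`x + d₁ = b * d₂ + c * d₃` of a gap `x` has `c < boundC` (`lt_boundC_of_rep`). -/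
noncomputable def boundC (d₁ d₂ d₃ : ℕ) : ℕ :=
  sInf {c | ∃ u v, c * d₃ = (u + 1) * d₁ + v * d₂}

variable {d₁ d₂ d₃ : ℕ}

lemma boundB_le {b u v : ℕ} (hb : 0 < b) (h : b * d₂ = u * d₁ + v * d₃) :
    boundB d₁ d₂ d₃ ≤ b :=
  Nat.sInf_le ⟨hb, u, v, h⟩

lemma boundB_spec (h1 : 0 < d₁) :
    0 < boundB d₁ d₂ d₃ ∧ ∃ u v, boundB d₁ d₂ d₃ * d₂ = u * d₁ + v * d₃ :=
  Nat.sInf_mem (s := {b | 0 < b ∧ ∃ u v, b * d₂ = u * d₁ + v * d₃}) ⟨d₁, h1, d₂, 0, by ring⟩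

lemma boundC_le {c u v : ℕ} (h : c * d₃ = (u + 1) * d₁ + v * d₂) : boundC d₁ d₂ d₃ ≤ c :=
  Nat.sInf_le ⟨u, v, h⟩

lemma exists_boundC_mul_eq (h3 : 0 < d₃) :
    ∃ u v, boundC d₁ d₂ d₃ * d₃ = (u + 1) * d₁ + v * d₂ := by
  obtain ⟨u, hu⟩ := Nat.exists_eq_add_of_lt h3
  exact Nat.sInf_mem (s := {c | ∃ u v, c * d₃ = (u + 1) * d₁ + v * d₂})
    ⟨d₁, u, 0, by rw [hu]; ring⟩

lemma mem_gen3_of_rel_le {x b c k e f : ℕ} (hx : x + d₁ = b * d₂ + c * d₃) (hk : 0 < k)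
    (he : e ≤ b) (hf : f ≤ c) (hrel : k * d₁ = e * d₂ + f * d₃) : x ∈ gen3 d₁ d₂ d₃ := by
  obtain ⟨k, rfl⟩ := Nat.exists_eq_add_of_lt hk
  obtain ⟨b, rfl⟩ := Nat.exists_eq_add_of_le he
  obtain ⟨c, rfl⟩ := Nat.exists_eq_add_of_le hf
  exact ⟨k, b, c, by linarith⟩

lemma exists_rep_of_mem_pseudoFrobenius (h1 : 0 < d₁) {x : ℕ}
    (hx : x ∈ pseudoFrobenius (gen3 d₁ d₂ d₃)) : ∃ b c, x + d₁ = b * d₂ + c * d₃ := by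
  obtain ⟨a, b, c, h⟩ := hx.2 d₁ ⟨1, 0, 0, by ring⟩ h1
  rcases Nat.eq_zero_or_eq_succ_pred a with rfl | ha
  · exact ⟨b, c, by simpa using h⟩
  · exact absurd ⟨a.pred, b, c, by rw [ha] at h; linarith⟩ hx.1

lemma lt_boundC_of_rep (h3 : 0 < d₃) {x b c : ℕ} (hx : x ∉ gen3 d₁ d₂ d₃)
    (h : x + d₁ = b * d₂ + c * d₃) : c < boundC d₁ d₂ d₃ := by
  obtain ⟨u, v, hC⟩ := exists_boundC_mul_eq (d₁ := d₁) (d₂ := d₂) h3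
  refine lt_of_not_ge fun hc => hx ?_
  obtain ⟨c, rfl⟩ := Nat.exists_eq_add_of_le hc
  exact ⟨u, b + v, c, by linarith⟩

lemma exists_rep_lt_of_mem_pseudoFrobenius (h1 : 0 < d₁) (h3 : 0 < d₃) {x : ℕ}
    (hx : x ∈ pseudoFrobenius (gen3 d₁ d₂ d₃)) :
    ∃ b c, x + d₁ = b * d₂ + c * d₃ ∧ b < boundB d₁ d₂ d₃ ∧ c < boundC d₁ d₂ d₃ := by
  obtain ⟨hBpos, u, v, hB⟩ := boundB_spec (d₂ := d₂) (d₃ := d₃) h1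
  suffices ∀ b c, x + d₁ = b * d₂ + c * d₃ → ∃ b' c', x + d₁ = b' * d₂ + c' * d₃ ∧
      b' < boundB d₁ d₂ d₃ by
    obtain ⟨b, c, h⟩ := exists_rep_of_mem_pseudoFrobenius h1 hx
    obtain ⟨b, c, h, hb⟩ := this b c h
    exact ⟨b, c, h, hb, lt_boundC_of_rep h3 hx.1 h⟩
  intro b
  induction b using Nat.strong_induction_on with
  | _ b ih =>
    intro c h
    by_cases hb : b < boundB d₁ d₂ d₃
    · exact ⟨b, c, h, hb⟩
    obtain ⟨b, rfl⟩ := Nat.exists_eq_add_of_le (not_lt.1 hb)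
    rcases Nat.eq_zero_or_eq_succ_pred u with rfl | hu
    -- trade `boundB` copies of `d₂` for `v` copies of `d₃`
    · exact ih b (by omega) (c + v) (by linarith)
    · exact absurd ⟨u.pred, b, c + v, by rw [hu] at hB; linarith⟩ hx.1

lemma eq_of_rep_le_rep {x y b c b' c' : ℕ} (hx : x ∈ pseudoFrobenius (gen3 d₁ d₂ d₃))
    (hy : y ∉ gen3 d₁ d₂ d₃) (ex : x + d₁ = b * d₂ + c * d₃) (ey : y + d₁ = b' * d₂ + c' * d₃)
    (hb : b ≤ b') (hc : c ≤ c') : x = y := by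
  obtain ⟨β, rfl⟩ := Nat.exists_eq_add_of_le hb
  obtain ⟨γ, rfl⟩ := Nat.exists_eq_add_of_le hc
  have hy' : y = x + (β * d₂ + γ * d₃) := by linarith
  by_contra hxy
  exact hy (hy' ▸ hx.2 _ ⟨0, β, γ, by ring⟩ (by omega))

lemma exists_rel_le_of_eq_add (h1 : 0 < d₁) {β γ s : ℕ} (hβ : β < boundB d₁ d₂ d₃)
    (hγ : γ < boundC d₁ d₂ d₃) (hs : s ∈ gen3 d₁ d₂ d₃) (h : β * d₂ + γ * d₃ = d₁ + s) :
    ∃ k e f, 0 < k ∧ e ≤ β ∧ f ≤ γ ∧ k * d₁ = e * d₂ + f * d₃ := by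
  obtain ⟨p, q, r, rfl⟩ := hs
  rcases le_or_gt q β with hq | hq <;> rcases le_or_gt r γ with hr | hr
  · obtain ⟨e, rfl⟩ := Nat.exists_eq_add_of_le hq
    obtain ⟨f, rfl⟩ := Nat.exists_eq_add_of_le hr
    exact ⟨p + 1, e, f, p.succ_pos, by omega, by omega, by linarith⟩
  · obtain ⟨e, rfl⟩ := Nat.exists_eq_add_of_le hq
    obtain ⟨r, rfl⟩ := Nat.exists_eq_add_of_lt hr
    have hrel : e * d₂ = (p + 1) * d₁ + (r + 1) * d₃ := by linarith
    have he : 0 < e := by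
      by_contra! he
      nlinarith
    exact absurd (boundB_le he hrel) (by omega)
  · obtain ⟨q, rfl⟩ := Nat.exists_eq_add_of_lt hq
    obtain ⟨f, rfl⟩ := Nat.exists_eq_add_of_le hr
    have hrel : f * d₃ = (p + 1) * d₁ + (q + 1) * d₂ := by linarith
    exact absurd (boundC_le hrel) (by omega)
  · obtain ⟨q, rfl⟩ := Nat.exists_eq_add_of_lt hq
    obtain ⟨r, rfl⟩ := Nat.exists_eq_add_of_lt hr
    nlinarith

/-- The join `(b₂, c₁)` of the two representations lies in `d₁ + S`. -/
lemma exists_rel_of_pseudoFrobenius_pair (h1 : 0 < d₁) (h2 : 0 < d₂) {x y b₁ c₁ b₂ c₂ : ℕ}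
    (hx : x ∈ pseudoFrobenius (gen3 d₁ d₂ d₃)) (hy : y ∉ gen3 d₁ d₂ d₃)
    (ex : x + d₁ = b₁ * d₂ + c₁ * d₃) (ey : y + d₁ = b₂ * d₂ + c₂ * d₃)
    (hb : b₁ < b₂) (hbB : b₂ < boundB d₁ d₂ d₃) (hcC : c₁ < boundC d₁ d₂ d₃) :
    ∃ k e f, b₁ < e ∧ e ≤ b₂ ∧ c₂ < f ∧ f ≤ c₁ ∧ k * d₁ = e * d₂ + f * d₃ := by
  obtain ⟨β, rfl⟩ := Nat.exists_eq_add_of_lt hb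
  have hjoin := hx.2 ((β + 1) * d₂) ⟨0, β + 1, 0, by ring⟩ (by positivity)
  obtain ⟨k, e, f, hk, he, hf, hrel⟩ :=
    exists_rel_le_of_eq_add h1 hbB hcC hjoin (by linarith)
  refine ⟨k, e, f, lt_of_not_ge fun he' => hx.1 ?_, he, lt_of_not_ge fun hf' => hy ?_, hf, hrel⟩
  · exact mem_gen3_of_rel_le ex hk he' hf hrel
  · exact mem_gen3_of_rel_le ey hk he hf' hrel

lemma le_of_rel_of_rel {k e f k' e' f' : ℕ} (hrel : k * d₁ = e * d₂ + f * d₃)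
    (hrel' : k' * d₁ = e' * d₂ + f' * d₃) (he : e < e') (he' : e' < boundB d₁ d₂ d₃)
    (hf : f < boundC d₁ d₂ d₃) : f ≤ f' := by
  by_contra! hf'
  obtain ⟨ε, rfl⟩ := Nat.exists_eq_add_of_lt he
  obtain ⟨φ, rfl⟩ := Nat.exists_eq_add_of_lt hf'
  rcases le_or_gt k k' with hk | hk
  · obtain ⟨κ, rfl⟩ := Nat.exists_eq_add_of_le hk
    have hrelB : (ε + 1) * d₂ = κ * d₁ + (φ + 1) * d₃ := by linarith
    exact absurd (boundB_le ε.succ_pos hrelB) (by omega)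
  · obtain ⟨κ, rfl⟩ := Nat.exists_eq_add_of_lt hk
    have hrelC : (φ + 1) * d₃ = (κ + 1) * d₁ + (ε + 1) * d₂ := by linarith
    exact absurd (boundC_le hrelC) (by omega)

lemma not_three_pseudoFrobenius (h1 : 0 < d₁) (h2 : 0 < d₂) {x y z b₁ c₁ b₂ c₂ b₃ c₃ : ℕ}
    (hx : x ∈ pseudoFrobenius (gen3 d₁ d₂ d₃)) (hy : y ∈ pseudoFrobenius (gen3 d₁ d₂ d₃))
    (hz : z ∉ gen3 d₁ d₂ d₃) (ex : x + d₁ = b₁ * d₂ + c₁ * d₃)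
    (ey : y + d₁ = b₂ * d₂ + c₂ * d₃) (ez : z + d₁ = b₃ * d₂ + c₃ * d₃)
    (h12 : b₁ < b₂) (h23 : b₂ < b₃) (hbB : b₃ < boundB d₁ d₂ d₃)
    (hcC : c₁ < boundC d₁ d₂ d₃) (hcC' : c₂ < boundC d₁ d₂ d₃) : False := by
  obtain ⟨k, e, f, -, he, hf, hf', hrel⟩ :=
    exists_rel_of_pseudoFrobenius_pair h1 h2 hx hy.1 ex ey h12 (h23.trans hbB) hcC
  obtain ⟨k', e', f', he', he'', -, hf'', hrel'⟩ :=
    exists_rel_of_pseudoFrobenius_pair h1 h2 hy hz ey ez h23 hbB hcC'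
  have := le_of_rel_of_rel hrel hrel' (by omega) (by omega) (by omega)
  omega

lemma ncard_pseudoFrobenius_gen3_le_two (h1 : 0 < d₁) (h2 : 0 < d₂) (h3 : 0 < d₃) :
    (pseudoFrobenius (gen3 d₁ d₂ d₃)).ncard ≤ 2 := by
  set P := pseudoFrobenius (gen3 d₁ d₂ d₃)
  rcases P.finite_or_infinite with hPfin | hPinf
  swap
  · simp [hPinf.ncard]
  rcases P.eq_empty_or_nonempty with hP | hP
  · simp [hP]
  choose! b c hrep hbB hcC using fun x (hx : x ∈ P) =>
    exists_rep_lt_of_mem_pseudoFrobenius h1 h3 hx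
  have hb : ∀ x ∈ P, ∀ y ∈ P, b x ≤ b y → x ≠ y → b x < b y := by
    intro x hx y hy hxy hne
    refine lt_of_le_of_ne hxy fun hxy' => hne ?_
    rcases le_total (c x) (c y) with hc | hc
    · exact eq_of_rep_le_rep hx hy.1 (hrep x hx) (hrep y hy) hxy hc
    · exact (eq_of_rep_le_rep hy hx.1 (hrep y hy) (hrep x hx) hxy'.ge hc).symm
  obtain ⟨x, hx, hxmin⟩ := Set.exists_min_image P b hPfin hP
  obtain ⟨z, hz, hzmax⟩ := Set.exists_max_image P b hPfin hP
  have hsub : P ⊆ {x, z} := by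
    intro y hy
    by_contra hxyz
    simp only [Set.mem_insert_iff, Set.mem_singleton_iff, not_or] at hxyz
    exact not_three_pseudoFrobenius h1 h2 hx hy hz.1 (hrep x hx) (hrep y hy) (hrep z hz)
      (hb x hx y hy (hxmin y hy) (Ne.symm hxyz.1)) (hb y hy z hz (hzmax y hy) hxyz.2)
      (hbB z hz) (hcC x hx) (hcC y hy)
  calc P.ncard ≤ ({x, z} : Set ℕ).ncard := Set.ncard_le_ncard hsub (Set.toFinite _)
    _ ≤ 2 := (Set.ncard_insert_le _ _).trans (by simp)

end ThreeGenerators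

/-- Wilf's question for embedding dimension three: for any `S₃ = ⟨d₁,d₂,d₃⟩`
minimally generated by three positive integers, `G₀/c₃ ≤ 2/3`, i.e. `3·G₀ ≤ 2·c₃`. -/
theorem wilf_embdim_three (d₁ d₂ d₃ : ℕ) (h : MinGen3 d₁ d₂ d₃) :
    3 * genus (gen3 d₁ d₂ d₃) ≤ 2 * conductorNum (gen3 d₁ d₂ d₃) ∧
      (genus (gen3 d₁ d₂ d₃) : ℚ) / (conductorNum (gen3 d₁ d₂ d₃) : ℚ) ≤ 2 / 3 := by
  obtain ⟨hd₁, h12, h23, -, hgcd, -, -, -⟩ := h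
  have hS := isNumericalSemigroup_gen3 hgcd
  have htype : (pseudoFrobenius (gen3 d₁ d₂ d₃)).ncard ≤ 2 :=
    ncard_pseudoFrobenius_gen3_le_two (by omega) (by omega) (by omega)
  have hgenus := hS.genus_le_ncard_pseudoFrobenius_mul.trans (Nat.mul_le_mul_right _ htype)
  have hsum := hS.genus_add_ncard_inter_Iio
  have hwilf : 3 * genus (gen3 d₁ d₂ d₃) ≤ 2 * conductorNum (gen3 d₁ d₂ d₃) := by omega
  refine ⟨hwilf, div_le_of_le_mul₀ (by positivity) (by positivity) ?_⟩
  have : (3 * genus (gen3 d₁ d₂ d₃) : ℚ) ≤ 2 * conductorNum (gen3 d₁ d₂ d₃) := by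
    exact_mod_cast hwilf
  linarith
end

section
/- Let S₃ = ⟨d₁,d₂,d₃⟩ be a numerical semigroup minimally generated by three positive integers with d₁ ≥ 4, and suppose ρ₃ = (d₁+d₂+d₃)/√(d₁d₂d₃) < 2/√3 (equivalently 3·(d₁+d₂+d₃)² < 4·d₁d₂d₃). Then e₃ = δ₁/c₃ < 1, i.e. d₁+d₂+d₃ − 1 < 2·(F₃+1). -/
/-!
Write `a, b, c` for the generators and give the pair `(u, v)` the weight `b u + c v`. In every
residue class modulo `a` pick the pair of least weight (ties broken by `u`); these pairs form a
set `D` of exactly `a` points, and `b u + c v - a` is a gap, so `b u + c v ≤ F + a` on `D`.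
An exchange argument shows that each maximal point of `D` is extreme in one coordinate, so `D`
is covered by two boxes `[0, u₁) × [0, v₁)` and `[0, u₂) × [0, v₂)` with `u₂ ≤ u₁`, `v₁ ≤ v₂` and
`b uᵢ + c vᵢ ≤ m := F + a + b + c`. Counting gives `a ≤ u₁ v₁ + u₂ v₂ - u₂ v₁`, and maximising
the right-hand side under these constraints yields Davison's bound `3abc ≤ m²`. With
`3σ² < 4abc`, where `σ = a + b + c`, this gives `3σ < 2(F + σ)`, i.e. `σ < 2F`.
-/

open Finset

lemma mem_of_frobeniusNum_lt {S : Set ℕ} (hS : ∃ N, ∀ n, N ≤ n → n ∈ S) {n : ℕ}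
    (hn : frobeniusNum S < n) : n ∈ S := by
  obtain ⟨N, hN⟩ := hS
  by_contra h
  have hbdd : BddAbove Sᶜ := ⟨N, fun m hm => not_lt.1 fun hNm => hm (hN m hNm.le)⟩
  exact (le_csSup hbdd h).not_gt hn

lemma exists_subset_Iic_union_Iic {α β : Type*} [LinearOrder α] [LinearOrder β]
    {s : Set (α × β)} (hs : s.Finite) (hne : s.Nonempty)
    (hext : ∀ Q, Maximal (· ∈ s) Q → (∀ p ∈ s, p.1 ≤ Q.1) ∨ (∀ p ∈ s, p.2 ≤ Q.2)) :
    ∃ M₁ ∈ s, ∃ M₂ ∈ s, M₂.1 ≤ M₁.1 ∧ M₁.2 ≤ M₂.2 ∧ s ⊆ Set.Iic M₁ ∪ Set.Iic M₂ := by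
  obtain ⟨M₁, hM₁, h₁⟩ := s.exists_max_image toLex hs hne
  obtain ⟨M₂, hM₂, h₂⟩ := s.exists_max_image (fun p => toLex p.swap) hs hne
  simp only [Prod.Lex.toLex_le_toLex, Prod.fst_swap, Prod.snd_swap] at h₁ h₂
  refine ⟨M₁, hM₁, M₂, hM₂, (h₁ M₂ hM₂).elim le_of_lt (·.1.le),
    (h₂ M₁ hM₁).elim le_of_lt (·.1.le), fun p hp => ?_⟩
  obtain ⟨Q, hpQ, hQ⟩ := hs.exists_le_maximal hp
  rcases hext Q hQ with hQ₁ | hQ₂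
  · have hQM := (h₁ Q hQ.prop).resolve_left (hQ₁ M₁ hM₁).not_gt
    exact .inl (hpQ.trans ⟨hQM.1.le, hQM.2⟩)
  · have hQM := (h₂ Q hQ.prop).resolve_left (hQ₂ M₂ hM₂).not_gt
    exact .inr (hpQ.trans ⟨hQM.2, hQM.1.le⟩)

lemma card_Iic_union_Iic {M₁ M₂ : ℕ × ℕ} (h₁ : M₂.1 ≤ M₁.1) (h₂ : M₁.2 ≤ M₂.2) :
    #(Iic M₁ ∪ Iic M₂) + (M₂.1 + 1) * (M₁.2 + 1) =
      (M₁.1 + 1) * (M₁.2 + 1) + (M₂.1 + 1) * (M₂.2 + 1) := by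
  have hinter : Iic M₁ ∩ Iic M₂ = Iic (M₂.1, M₁.2) := by
    apply coe_injective
    push_cast
    rw [Set.Iic_inter_Iic, Prod.inf_def, inf_eq_right.2 h₁, inf_eq_left.2 h₂]
  have h := card_union_add_card_inter (Iic M₁) (Iic M₂)
  simpa only [hinter, card_Iic_prod, Nat.card_Iic] using h

lemma three_mul_le_sq_of_staircase {R : Type*} [CommRing R] [LinearOrder R] [IsStrictOrderedRing R]
    {a b c u₁ v₁ u₂ v₂ m : R} (hb : 0 ≤ b) (hc : 0 ≤ c) (hv₁ : 0 ≤ v₁) (hu₂ : 0 ≤ u₂)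
    (h₁ : b * u₁ + c * v₁ ≤ m) (h₂ : b * u₂ + c * v₂ ≤ m)
    (ha : a + u₂ * v₁ ≤ u₁ * v₁ + u₂ * v₂) : 3 * a * b * c ≤ m ^ 2 := by
  have hB : 0 ≤ c * v₁ := mul_nonneg hc hv₁
  have hC : 0 ≤ b * u₂ := mul_nonneg hb hu₂
  nlinarith [mul_le_mul_of_nonneg_left ha (mul_nonneg hb hc),
    mul_le_mul_of_nonneg_right (le_sub_iff_add_le.2 h₁) hB,
    mul_le_mul_of_nonneg_left (le_sub_iff_add_le'.2 h₂) hC,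
    sq_nonneg (2 * m - 3 * (c * v₁) - 3 * (b * u₂)), sq_nonneg (c * v₁ - b * u₂)]

section AperyPairs

variable (a b c : ℕ)

def pairWeight (p : ℕ × ℕ) : ℕ := b * p.1 + c * p.2

/-- Weight first, ties broken by the first coordinate: injective once `0 < c`, so each residue
class modulo `a` has a unique least pair. -/
def pairKey (p : ℕ × ℕ) : ℕ ×ₗ ℕ := toLex (pairWeight b c p, p.1)

/-- The least pairs of their residue classes; their weights form the Apéry set of `⟨a, b, c⟩`
with respect to `a`. -/
def aperyPairs : Set (ℕ × ℕ) :=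
  {p | ∀ q, pairWeight b c q ≡ pairWeight b c p [MOD a] → pairKey b c p ≤ pairKey b c q}

variable {a b c}

lemma pairWeight_add (p q : ℕ × ℕ) :
    pairWeight b c (p + q) = pairWeight b c p + pairWeight b c q := by
  simp only [pairWeight, Prod.fst_add, Prod.snd_add]; ring

lemma pairKey_add (p q : ℕ × ℕ) : pairKey b c (p + q) = pairKey b c p + pairKey b c q := by
  simp only [pairKey, pairWeight_add, Prod.fst_add, ← toLex_add, Prod.mk_add_mk]

lemma pairKey_injective (hc : 0 < c) : Function.Injective (pairKey b c) := by
  rintro ⟨u, v⟩ ⟨u', v'⟩ h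
  simp only [pairKey, pairWeight, toLex_inj, Prod.mk.injEq] at h
  obtain ⟨hw, rfl⟩ := h
  rw [Nat.eq_of_mul_eq_mul_left hc (Nat.add_left_cancel hw)]

lemma pairKey_le_of_le_add {X Z U : ℕ × ℕ} (hX : X ∈ aperyPairs a b c) (hZ : Z ≤ X + U)
    (hUZ : pairWeight b c U ≡ pairWeight b c Z [MOD a]) : pairKey b c Z ≤ pairKey b c U := by
  obtain ⟨Y, hY⟩ := exists_add_of_le hZ
  have hYX : pairWeight b c Y ≡ pairWeight b c X [MOD a] := by
    have h := congrArg (pairWeight b c) hY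
    rw [pairWeight_add, pairWeight_add] at h
    refine Nat.ModEq.add_left_cancel' (pairWeight b c Z) ?_
    calc pairWeight b c Z + pairWeight b c Y = pairWeight b c X + pairWeight b c U := h.symm
      _ ≡ pairWeight b c X + pairWeight b c Z [MOD a] := Nat.ModEq.add_left _ hUZ
      _ = pairWeight b c Z + pairWeight b c X := add_comm ..
  have h := congrArg (pairKey b c) hY
  rw [pairKey_add, pairKey_add] at h
  refine le_of_add_le_add_left (a := pairKey b c X) ?_
  calc pairKey b c X + pairKey b c Z ≤ pairKey b c Y + pairKey b c Z := by gcongr; exact hX Y hYX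
    _ = pairKey b c X + pairKey b c U := by rw [h, add_comm]

lemma exists_pairKey_lt_of_notMem {p : ℕ × ℕ} (hp : p ∉ aperyPairs a b c) :
    ∃ q, pairWeight b c q ≡ pairWeight b c p [MOD a] ∧ pairKey b c q < pairKey b c p := by
  simpa [aperyPairs] using hp

lemma exists_mem_aperyPairs_modEq (p : ℕ × ℕ) :
    ∃ q ∈ aperyPairs a b c, pairWeight b c q ≡ pairWeight b c p [MOD a] := by
  obtain ⟨q, hq, hmin⟩ := (InvImage.wf (pairKey b c) wellFounded_lt).has_min
    {q | pairWeight b c q ≡ pairWeight b c p [MOD a]} ⟨p, rfl⟩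
  exact ⟨q, fun t ht => not_lt.1 (hmin t (ht.trans hq)), hq⟩

lemma exists_pairWeight_modEq (ha : 0 < a) (hgcd : Nat.gcd a (Nat.gcd b c) = 1) (n : ℕ) :
    ∃ p, pairWeight b c p ≡ n [MOD a] := by
  have : NeZero a := ⟨ha.ne'⟩
  -- Bézout twice: `gcd b c = b x + c y` and `gcd b c * t ≡ 1 [ZMOD a]`.
  have hbc := Nat.gcd_eq_gcd_ab b c
  have h1 := Nat.gcd_eq_gcd_ab a (Nat.gcd b c)
  rw [hgcd] at h1
  set t : ZMod a := (n : ZMod a) * (a.gcdB (b.gcd c) : ZMod a)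
  refine ⟨((t * b.gcdA c : ZMod a).val, (t * b.gcdB c : ZMod a).val), ?_⟩
  rw [← ZMod.natCast_eq_natCast_iff]
  have h1' := congrArg (Int.cast : ℤ → ZMod a) h1
  have hbc' := congrArg (Int.cast : ℤ → ZMod a) hbc
  push_cast [pairWeight, ZMod.natCast_val, ZMod.cast_id] at h1' hbc' ⊢
  simp only [ZMod.natCast_self, zero_mul, zero_add] at h1'
  linear_combination -t * hbc' - n * h1'

lemma exists_mem_aperyPairs_pairWeight_modEq (ha : 0 < a) (hgcd : Nat.gcd a (Nat.gcd b c) = 1)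
    (n : ℕ) : ∃ p ∈ aperyPairs a b c, pairWeight b c p ≡ n [MOD a] :=
  let ⟨p, hp⟩ := exists_pairWeight_modEq ha hgcd n
  let ⟨q, hq, hqp⟩ := exists_mem_aperyPairs_modEq (a := a) p
  ⟨q, hq, hqp.trans hp⟩

lemma exists_forall_le_mem_gen3 (ha : 0 < a) (hgcd : Nat.gcd a (Nat.gcd b c) = 1) :
    ∃ N, ∀ n, N ≤ n → n ∈ gen3 a b c := by
  choose f hf using exists_pairWeight_modEq ha hgcd
  refine ⟨(range a).sup fun r => pairWeight b c (f r), fun n hn => ?_⟩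
  have hle : pairWeight b c (f (n % a)) ≤ n :=
    (le_sup (f := fun r => pairWeight b c (f r)) (mem_range.2 (Nat.mod_lt n ha))).trans hn
  obtain ⟨k, hk⟩ := (Nat.modEq_iff_dvd' hle).1 ((hf _).trans (Nat.mod_modEq n a))
  refine ⟨k, (f (n % a)).1, (f (n % a)).2, ?_⟩
  simp only [pairWeight] at hle hk
  rw [mul_comm k, mul_comm (f _).1, mul_comm (f _).2]
  omega

variable {F : ℕ}

lemma pairWeight_le_of_mem_aperyPairs (ha : 0 < a) (hF : ∀ n, F < n → n ∈ gen3 a b c)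
    {p : ℕ × ℕ} (hp : p ∈ aperyPairs a b c) : pairWeight b c p ≤ F + a := by
  by_contra! h
  obtain ⟨x, y, z, hxyz⟩ := hF (pairWeight b c p - a) (by omega)
  have hw : pairWeight b c p = pairWeight b c (y, z) + (x + 1) * a := by
    simp only [pairWeight, mul_comm y, mul_comm z, add_one_mul] at h hxyz ⊢; omega
  have hkey := hp (y, z) (by rw [hw]; exact (Nat.add_mul_mod_self_right _ _ _).symm)
  rw [add_one_mul] at hw
  simp only [pairKey, Prod.Lex.toLex_le_toLex] at hkey
  omega

lemma aperyPairs_finite (ha : 0 < a) (hb : 0 < b) (hc : 0 < c)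
    (hF : ∀ n, F < n → n ∈ gen3 a b c) : (aperyPairs a b c).Finite := by
  refine (Set.finite_Iic (F + a, F + a)).subset fun p hp => ?_
  have hw := pairWeight_le_of_mem_aperyPairs ha hF hp
  have h₁ : p.1 ≤ b * p.1 := Nat.le_mul_of_pos_left _ hb
  have h₂ : p.2 ≤ c * p.2 := Nat.le_mul_of_pos_left _ hc
  unfold pairWeight at hw
  exact ⟨by omega, by omega⟩

lemma forall_fst_le_or_forall_snd_le_of_maximal (hc : 0 < c) {Q : ℕ × ℕ}
    (hQ : Maximal (· ∈ aperyPairs a b c) Q) :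
    (∀ p ∈ aperyPairs a b c, p.1 ≤ Q.1) ∨ (∀ p ∈ aperyPairs a b c, p.2 ≤ Q.2) := by
  by_contra! ⟨⟨⟨p₁, p₂⟩, hP, hPQ⟩, ⟨r₁, r₂⟩, hR, hRQ⟩
  rcases Q with ⟨i, j⟩
  have hZ₁ : (i + 1, j) ∉ aperyPairs a b c := fun h => hQ.not_gt h (by simp [Prod.lt_iff])
  have hZ₂ : (i, j + 1) ∉ aperyPairs a b c := fun h => hQ.not_gt h (by simp [Prod.lt_iff])
  obtain ⟨U, hU, hUlt⟩ := exists_pairKey_lt_of_notMem hZ₁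
  obtain ⟨V, hV, hVlt⟩ := exists_pairKey_lt_of_notMem hZ₂
  -- Exchanging against `Q`, `P`, `R` forces `U = (0, u₂)` with `p₂ + u₂ < j` and
  -- `V = (v₁, 0)` with `r₁ + v₁ < i`; then the congruent pairs `G`, `H` below can be
  -- compared in neither direction.
  have hQU : ¬ (i + 1, j) ≤ (i, j) + U :=
    fun h => (pairKey_le_of_le_add hQ.prop h hU).not_gt hUlt
  have hPU : ¬ (i + 1, j) ≤ (p₁, p₂) + U :=
    fun h => (pairKey_le_of_le_add hP h hU).not_gt hUlt
  have hQV : ¬ (i, j + 1) ≤ (i, j) + V :=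
    fun h => (pairKey_le_of_le_add hQ.prop h hV).not_gt hVlt
  have hRV : ¬ (i, j + 1) ≤ (r₁, r₂) + V :=
    fun h => (pairKey_le_of_le_add hR h hV).not_gt hVlt
  set G := (i, j + 1) + U
  set H := (i + 1, j) + V
  have hGH : pairWeight b c G ≡ pairWeight b c H [MOD a] := by
    rw [pairWeight_add, pairWeight_add, add_comm (pairWeight b c (i + 1, j))]
    exact hU.add_left _ |>.trans (hV.symm.add_right _)
  have hPG : ¬ H ≤ (p₁, p₂) + G ∨ ¬ G ≤ (r₁, r₂) + H ∨ G = H := by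
    rcases lt_trichotomy (pairKey b c G) (pairKey b c H) with hlt | heq | hgt
    · exact .inl fun h => (pairKey_le_of_le_add hP h hGH).not_gt hlt
    · exact .inr (.inr (pairKey_injective hc heq))
    · exact .inr (.inl fun h => (pairKey_le_of_le_add hR h hGH.symm).not_gt hgt)
  obtain ⟨u₁, u₂⟩ := U
  obtain ⟨v₁, v₂⟩ := V
  simp only [G, H, Prod.mk_add_mk, Prod.mk_le_mk, Prod.mk.injEq, not_and_or, not_le]
    at hQU hPU hQV hRV hPG
  omega

lemma le_card_of_aperyPairs_subset (ha : 0 < a) (hgcd : Nat.gcd a (Nat.gcd b c) = 1)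
    {t : Finset (ℕ × ℕ)} (ht : aperyPairs a b c ⊆ t) : a ≤ #t := by
  choose f hfD hf using exists_mem_aperyPairs_pairWeight_modEq (b := b) (c := c) ha hgcd
  refine card_range a ▸ card_le_card_of_injOn f (fun n _ => ht (hfD n)) fun n hn m hm hnm => ?_
  have : n ≡ m [MOD a] := (hf n).symm.trans (hnm ▸ hf m)
  rwa [Nat.ModEq, Nat.mod_eq_of_lt (mem_range.1 hn), Nat.mod_eq_of_lt (mem_range.1 hm)] at this

end AperyPairs

theorem three_mul_le_sq_frobeniusNum_add {a b c : ℕ} (ha : 0 < a) (hb : 0 < b) (hc : 0 < c)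
    (hgcd : Nat.gcd a (Nat.gcd b c) = 1) :
    3 * a * b * c ≤ (frobeniusNum (gen3 a b c) + a + b + c) ^ 2 := by
  have hF : ∀ n, frobeniusNum (gen3 a b c) < n → n ∈ gen3 a b c :=
    fun _ => mem_of_frobeniusNum_lt (exists_forall_le_mem_gen3 ha hgcd)
  obtain ⟨p₀, hp₀, -⟩ := exists_mem_aperyPairs_pairWeight_modEq (b := b) (c := c) ha hgcd 0
  obtain ⟨M₁, hM₁, M₂, hM₂, h₁, h₂, hsub⟩ := exists_subset_Iic_union_Iic
    (aperyPairs_finite ha hb hc hF) ⟨p₀, hp₀⟩ fun _ => forall_fst_le_or_forall_snd_le_of_maximal hc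
  have hcard := le_card_of_aperyPairs_subset ha hgcd (t := Iic M₁ ∪ Iic M₂) (by simpa using hsub)
  have hw₁ := pairWeight_le_of_mem_aperyPairs ha hF hM₁
  have hw₂ := pairWeight_le_of_mem_aperyPairs ha hF hM₂
  rw [← Nat.add_le_add_iff_right, card_Iic_union_Iic h₁ h₂] at hcard
  unfold pairWeight at hw₁ hw₂
  have := three_mul_le_sq_of_staircase (R := ℤ) (a := a) (b := b) (c := c)
    (u₁ := M₁.1 + 1) (v₁ := M₁.2 + 1) (u₂ := M₂.1 + 1) (v₂ := M₂.2 + 1)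
    (m := frobeniusNum (gen3 a b c) + a + b + c) (by positivity) (by positivity) (by positivity)
    (by positivity) (by linarith) (by linarith) (by exact_mod_cast hcard)
  exact_mod_cast this

theorem e3_lt_one_general (d₁ d₂ d₃ : ℕ) (h : MinGen3 d₁ d₂ d₃)
    (hρ : 3 * (d₁ + d₂ + d₃) ^ 2 < 4 * (d₁ * d₂ * d₃)) :
    (((d₁ : ℝ) + d₂ + d₃ - 1) / 2) / ((frobeniusNum (gen3 d₁ d₂ d₃) : ℝ) + 1) < 1 ∧
      (d₁ : ℤ) + d₂ + d₃ - 1 < 2 * ((frobeniusNum (gen3 d₁ d₂ d₃) : ℤ) + 1) := by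
  obtain ⟨h₁, h₁₂, h₂₃, -, hgcd, -⟩ := h
  have hDavison := three_mul_le_sq_frobeniusNum_add (by omega) (by omega) (by omega) hgcd
  set F := frobeniusNum (gen3 d₁ d₂ d₃)
  have hsq : (3 * (d₁ + d₂ + d₃)) ^ 2 < (2 * (F + d₁ + d₂ + d₃)) ^ 2 := by nlinarith
  have hlt := lt_of_pow_lt_pow_left₀ 2 (Nat.zero_le _) hsq
  have hZ : (d₁ : ℤ) + d₂ + d₃ - 1 < 2 * ((F : ℤ) + 1) := by omega
  refine ⟨(div_lt_one (by positivity)).2 ?_, hZ⟩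
  have hR : (d₁ : ℝ) + d₂ + d₃ - 1 < 2 * ((F : ℝ) + 1) := by exact_mod_cast hZ
  linarith

/-- If `S₃ = ⟨d₁,d₂,d₃⟩` is minimally generated with `d₁ ≥ 4` and
`ρ₃ = σ₁/√π₃ < 2/√3` (equivalently `3σ₁² < 4π₃`), then `e₃ = δ₁/c₃ < 1`,
i.e. `d₁+d₂+d₃ − 1 < 2·(F₃+1)`. -/
theorem e3_lt_one (d₁ d₂ d₃ : ℕ) (h : MinGen3 d₁ d₂ d₃) (h4 : 4 ≤ d₁)
    (hρ : 3 * (d₁ + d₂ + d₃) ^ 2 < 4 * (d₁ * d₂ * d₃)) :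
    (((d₁ : ℝ) + d₂ + d₃ - 1) / 2) / ((frobeniusNum (gen3 d₁ d₂ d₃) : ℝ) + 1) < 1 ∧
      (d₁ : ℤ) + d₂ + d₃ - 1 < 2 * ((frobeniusNum (gen3 d₁ d₂ d₃) : ℤ) + 1) :=
  e3_lt_one_general d₁ d₂ d₃ h hρ
end

section
/- Let d₁, d₂, d₃ be positive real numbers with 3 < d₁ ≤ d₂ ≤ d₃. If (d₁+d₂+d₃)/√(d₁d₂d₃) < 2/√3, then d₂·d₃ > C(d₁), where C(x) = (3/4)·(x/(√x − √3))². -/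
/-- For positive reals `3 < d₁ ≤ d₂ ≤ d₃` with `(d₁+d₂+d₃)/√(d₁d₂d₃) < 2/√3`,
one has `d₂·d₃ > C(d₁)` where `C(x) = (3/4)·(x/(√x − √3))²`. -/
theorem prod_gt_C (d₁ d₂ d₃ : ℝ) (h3 : 3 < d₁) (h12 : d₁ ≤ d₂) (h23 : d₂ ≤ d₃)
    (hρ : (d₁ + d₂ + d₃) / Real.sqrt (d₁ * d₂ * d₃) < 2 / Real.sqrt 3) :
    d₂ * d₃ > 3 / 4 * (d₁ / (Real.sqrt d₁ - Real.sqrt 3)) ^ 2 := by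
  have hd1 : (0:ℝ) < d₁ := by linarith
  have hd2 : (0:ℝ) < d₂ := by linarith
  have hd3 : (0:ℝ) < d₃ := by linarith
  set s1 := Real.sqrt d₁ with hs1def
  set s3 := Real.sqrt 3 with hs3def
  set P := Real.sqrt (d₂ * d₃) with hPdef
  have hs : s3 < s1 := Real.sqrt_lt_sqrt (by norm_num) h3
  have hs3 : (0:ℝ) < s3 := Real.sqrt_pos.mpr (by norm_num)
  have hP : (0:ℝ) < P := Real.sqrt_pos.mpr (by positivity)
  have hP2 : P ^ 2 = d₂ * d₃ := Real.sq_sqrt (by positivity)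
  have hs12 : s1 ^ 2 = d₁ := Real.sq_sqrt hd1.le
  have hs32 : s3 ^ 2 = 3 := Real.sq_sqrt (by norm_num)
  have hsplit : Real.sqrt (d₁ * d₂ * d₃) = s1 * P := by
    rw [mul_assoc, Real.sqrt_mul hd1.le]
  have hBpos : (0:ℝ) < Real.sqrt (d₁ * d₂ * d₃) := Real.sqrt_pos.mpr (by positivity)
  have hAM : 2 * P ≤ d₂ + d₃ := by
    have h1 : P = Real.sqrt d₂ * Real.sqrt d₃ := Real.sqrt_mul hd2.le _
    nlinarith [sq_nonneg (Real.sqrt d₂ - Real.sqrt d₃), Real.sq_sqrt hd2.le,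
      Real.sq_sqrt hd3.le]
  have hρ' : (d₁ + d₂ + d₃) * s3 < 2 * (s1 * P) := by
    rw [div_lt_div_iff₀ hBpos hs3] at hρ
    rw [← hsplit]; linarith
  have hd : s3 * d₁ < 2 * P * (s1 - s3) := by nlinarith
  have hkey : 3 * d₁ ^ 2 < 4 * (d₂ * d₃) * (s1 - s3) ^ 2 := by
    have hsq := mul_self_lt_mul_self (by positivity : (0:ℝ) ≤ s3 * d₁) hd
    nlinarith
  have heq : 3 / 4 * (d₁ / (s1 - s3)) ^ 2 = 3 * d₁ ^ 2 / (4 * (s1 - s3) ^ 2) := by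
    field_simp
  rw [gt_iff_lt, heq, div_lt_iff₀ (by have h := sub_pos.mpr hs; positivity : (0:ℝ) < 4 * (s1 - s3) ^ 2)]
  nlinarith
end

section
/- Let S₃ = ⟨d₁,d₂,d₃⟩ be a symmetric numerical semigroup minimally generated by three positive integers. Then v = π₃/g₃² satisfies 0 < v ≤ 1/4; equivalently, (F₃ + d₁+d₂+d₃)² ≥ 4·d₁d₂d₃. -/
namespace VB

/-- Chicken McNugget consequence -/
lemma chicken {m n k : ℕ} (cop : Nat.Coprime m n) (hm : 1 < m) (hn : 1 < n)
    (hk : (m-1)*(n-1) ≤ k) : ∃ a b : ℕ, k = a * m + b * n := by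
  have H := frobeniusNumber_pair cop hm hn
  have hmn : m + n ≤ m * n := Nat.add_le_mul hm hn
  have hk' : k ∉ { k | k ∉ AddSubmonoid.closure ({m, n} : Set ℕ) } := by
    intro hmem
    have := H.2 hmem
    have : (m-1)*(n-1) ≤ m*n - m - n := le_trans hk this
    have h2 : (m-1)*(n-1) = m*n - m - n + 1 := by
      obtain ⟨m', rfl⟩ : ∃ m', m = m' + 1 := ⟨m-1, by omega⟩
      obtain ⟨n', rfl⟩ : ∃ n', n = n' + 1 := ⟨n-1, by omega⟩
      have e1 : (m'+1)*(n'+1) = m'*n' + m' + n' + 1 := by ring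
      have e2 : (m'+1-1)*(n'+1-1) = m'*n' := by simp
      have hm' : 1 ≤ m' := by omega
      have hn' : 1 ≤ n' := by omega
      have : 1 ≤ m'*n' := Nat.one_le_iff_ne_zero.mpr (by positivity)
      omega
    omega
  simp only [Set.mem_setOf_eq, not_not] at hk'
  rw [AddSubmonoid.mem_closure_pair] at hk'
  obtain ⟨a, b, hab⟩ := hk'
  exact ⟨a, b, by simpa [smul_eq_mul] using hab.symm⟩


section Basics
variable {d₁ d₂ d₃ : ℕ}

lemma gen3_add {x y : ℕ} (hx : x ∈ gen3 d₁ d₂ d₃) (hy : y ∈ gen3 d₁ d₂ d₃) :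
    x + y ∈ gen3 d₁ d₂ d₃ := by
  obtain ⟨a, b, c, rfl⟩ := hx
  obtain ⟨a', b', c', rfl⟩ := hy
  exact ⟨a + a', b + b', c + c', by ring⟩

lemma gen3_zero : 0 ∈ gen3 d₁ d₂ d₃ := ⟨0, 0, 0, by ring⟩

lemma gen3_d₂ : d₂ ∈ gen3 d₁ d₂ d₃ := ⟨0, 1, 0, by ring⟩
lemma gen3_d₃ : d₃ ∈ gen3 d₁ d₂ d₃ := ⟨0, 0, 1, by ring⟩

lemma gen3_min (h2 : d₁ ≤ d₂) (h3 : d₂ ≤ d₃) {s : ℕ} (hs : s ∈ gen3 d₁ d₂ d₃) :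
    s = 0 ∨ d₁ ≤ s := by
  obtain ⟨a, b, c, rfl⟩ := hs
  rcases Nat.eq_zero_or_pos (a + b + c) with h | h
  · left
    have : a = 0 ∧ b = 0 ∧ c = 0 := by omega
    simp [this.1, this.2.1, this.2.2]
  · right
    have e1 : b*d₁ ≤ b*d₂ := Nat.mul_le_mul (le_refl b) h2
    have e2 : c*d₁ ≤ c*d₃ := Nat.mul_le_mul (le_refl c) (le_trans h2 h3)
    have e3 : d₁*(a+b+c) = a*d₁+b*d₁+c*d₁ := by ring
    have e4 : d₁ ≤ d₁*(a+b+c) := Nat.le_mul_of_pos_right d₁ h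
    omega

/-- elements of `gen3` below `d₂` are multiples of `d₁`. -/
lemma gen3_small (h1 : 0 < d₁) (h3 : d₂ ≤ d₃) {s : ℕ} (hs : s ∈ gen3 d₁ d₂ d₃)
    (hlt : s < d₂) : ∃ a, s = a * d₁ := by
  obtain ⟨a, b, c, rfl⟩ := hs
  have hb : b = 0 := by
    by_contra hb
    have : d₂ ≤ b*d₂ := Nat.le_mul_of_pos_left d₂ (by omega)
    omega
  have hc : c = 0 := by
    by_contra hc
    have : d₃ ≤ c*d₃ := Nat.le_mul_of_pos_left d₃ (by omega)
    omega
  exact ⟨a, by simp [hb, hc]⟩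

lemma gen3_cofinite (h12 : 0 < d₁) (hd₂ : 0 < d₂) (h23 : d₂ < d₃)
    (hg : Nat.gcd d₁ (Nat.gcd d₂ d₃) = 1)
    (hm3 : d₃ ∉ gen2 d₁ d₂) :
    ∃ N, ∀ n, N ≤ n → n ∈ gen3 d₁ d₂ d₃ := by
  set g := Nat.gcd d₂ d₃ with hgdef
  have hd₃pos : 0 < d₃ := by omega
  have hgpos : 0 < g := Nat.gcd_pos_of_pos_left _ hd₂
  set β := d₂ / g with hβdef
  set γ := d₃ / g with hγdef
  have hβ : g * β = d₂ := Nat.mul_div_cancel' (Nat.gcd_dvd_left _ _)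
  have hγ : g * γ = d₃ := Nat.mul_div_cancel' (Nat.gcd_dvd_right _ _)
  have hcop : Nat.Coprime β γ := Nat.coprime_div_gcd_div_gcd hgpos
  have hβ1 : 2 ≤ β := by
    rcases Nat.lt_or_ge β 2 with hb | hb
    · exfalso
      interval_cases β
      · simp at hβ; omega
      · have hdvd : d₂ ∣ d₃ := by
          rw [← hβ]
          simpa using Nat.gcd_dvd_right d₂ d₃
        obtain ⟨k, hk⟩ := hdvd
        exact hm3 ⟨0, k, by rw [hk]; ring⟩
    · exact hb
  have hγ1 : 2 ≤ γ := by
    rcases Nat.lt_or_ge γ 2 with hb | hb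
    · exfalso
      interval_cases γ
      · simp at hγ; omega
      · have hdvd : d₃ ∣ d₂ := by
          rw [← hγ]
          simpa using Nat.gcd_dvd_left d₂ d₃
        have := Nat.le_of_dvd hd₂ hdvd
        omega
    · exact hb
  haveI : NeZero g := ⟨hgpos.ne'⟩
  refine ⟨g * d₁ + g * ((β-1)*(γ-1)), fun n hn => ?_⟩
  -- choose a < g with a * d₁ ≡ n [MOD g]
  set u : (ZMod g)ˣ := ZMod.unitOfCoprime d₁ hg with hu
  set z : ZMod g := (n : ZMod g) * ↑u⁻¹ with hz
  set a := z.val with ha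
  have halt : a < g := ZMod.val_lt z
  have hkey : ((a * d₁ : ℕ) : ZMod g) = (n : ZMod g) := by
    have h1 : ((a : ℕ) : ZMod g) = z := ZMod.natCast_rightInverse z
    have h2 : ((a * d₁ : ℕ) : ZMod g) = z * (d₁ : ZMod g) := by push_cast [h1]; rfl
    rw [h2, hz]
    have h3 : (d₁ : ZMod g) = (u : ZMod g) := by rw [ZMod.coe_unitOfCoprime]
    rw [h3, mul_assoc, ← Units.val_mul, inv_mul_cancel]
    simp
  have hmod : a * d₁ ≡ n [MOD g] := (ZMod.natCast_eq_natCast_iff _ _ _).mp hkey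
  have hle : a * d₁ ≤ n := by
    have h1 : (a+1) * d₁ ≤ g * d₁ := Nat.mul_le_mul (by omega) (le_refl d₁)
    have h2 : (a+1) * d₁ = a * d₁ + d₁ := by ring
    omega
  have hdvd : g ∣ n - a * d₁ := (Nat.modEq_iff_dvd' hle).mp hmod
  set m := (n - a * d₁) / g with hm
  have hgm : g * m = n - a * d₁ := Nat.mul_div_cancel' hdvd
  have hmge : (β-1)*(γ-1) ≤ m := by
    have h1 : g * ((β-1)*(γ-1)) ≤ n - a * d₁ := by
      have : a * d₁ ≤ g * d₁ := Nat.mul_le_mul (le_of_lt halt) (le_refl d₁)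
      omega
    by_contra hc
    push_neg at hc
    have : g * m < g * ((β-1)*(γ-1)) := by
      exact Nat.mul_lt_mul_of_pos_left hc hgpos
    omega
  obtain ⟨x, y, hxy⟩ := VB.chicken hcop hβ1 hγ1 hmge
  refine ⟨a, x, y, ?_⟩
  have e : g*(x*β+y*γ) = x*d₂ + y*d₃ := by rw [← hβ, ← hγ]; ring
  have e2 : g * m = g * (x*β + y*γ) := by rw [hxy]
  omega

end Basics

lemma final_alg {d₁ d₂ d₃ β γ B C : ℕ} (hd₂ : 0 < d₂) (hd₃ : 0 < d₃)
    (hqβ : C + 1 ≤ β) (hγd2 : γ * d₂ = β * d₃)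
    (hkey : d₁ ≤ (B + 1) * (C + 1) + (B + 1 - γ) * (β - (C + 1))) :
    4 * (d₁ * d₂ * d₃) ≤ ((B + 1) * d₂ + (C + 1) * d₃) ^ 2 := by
  rcases Nat.lt_or_ge B γ with hBγ | hBγ
  · have h0 : B + 1 - γ = 0 := by omega
    rw [h0] at hkey
    simp at hkey
    zify at hkey ⊢
    nlinarith [sq_nonneg ((B + 1 : ℤ) * d₂ - (C + 1) * d₃), hkey,
      mul_le_mul_of_nonneg_right hkey (by positivity : (0:ℤ) ≤ 4 * d₂ * d₃),
      (by positivity : (0:ℤ) < d₂), (by positivity : (0:ℤ) < d₃)]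
  · zify [hqβ, (by omega : γ ≤ B + 1)] at hkey ⊢
    have hrel : (γ : ℤ) * d₂ = β * d₃ := by exact_mod_cast hγd2
    have hexp : (4:ℤ) * d₂ * d₃ * ((B + 1) * (C + 1) + ((B:ℤ) + 1 - γ) * ((β:ℤ) - (C + 1))) =
        4 * γ * d₂ * ((B + 1) * d₂ + (C + 1) * d₃) - 4 * (γ * d₂)^2 := by
      linear_combination (4 * (γ:ℤ) * d₂ - 4 * ((B:ℤ) + 1) * d₂) * hrel
    nlinarith [sq_nonneg (((B:ℤ) + 1) * d₂ + ((C:ℤ) + 1) * d₃ - 2 * γ * d₂), hexp,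
      mul_le_mul_of_nonneg_left hkey (by positivity : (0:ℤ) ≤ 4 * d₂ * d₃)]

theorem main_ineq {d₁ d₂ d₃ : ℕ} (h : MinGen3 d₁ d₂ d₃)
    (hsym : IsSymmetric (gen3 d₁ d₂ d₃)) :
    4 * (d₁ * d₂ * d₃) ≤ (frobeniusNum (gen3 d₁ d₂ d₃) + (d₁ + d₂ + d₃)) ^ 2 := by
  obtain ⟨hd13, h12, h23, hbig, hgcd, hmin1, hmin2, hmin3⟩ := h
  have hd₂ : 0 < d₂ := by omega
  have hd₃ : 0 < d₃ := by omega
  obtain ⟨N, hN⟩ := gen3_cofinite (d₁ := d₁) (by omega) hd₂ h23 hgcd hmin3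
  have h1S : (1:ℕ) ∉ gen3 d₁ d₂ d₃ := by
    intro hc
    rcases gen3_min (by omega) (by omega) hc with h | h <;> omega
  have hGne : ((gen3 d₁ d₂ d₃)ᶜ : Set ℕ).Nonempty := ⟨1, h1S⟩
  have hGbdd : BddAbove ((gen3 d₁ d₂ d₃)ᶜ : Set ℕ) := by
    refine ⟨N, fun x hx => ?_⟩
    by_contra hc
    push_neg at hc
    exact hx (hN x (by omega))
  set F := frobeniusNum (gen3 d₁ d₂ d₃) with hFdef
  have hFgap : F ∉ gen3 d₁ d₂ d₃ := Nat.sSup_mem hGne hGbdd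
  have hFmax : ∀ n, F < n → n ∈ gen3 d₁ d₂ d₃ := by
    intro n hn
    by_contra hc
    have : n ≤ F := le_csSup hGbdd hc
    omega
  have hF1 : 1 ≤ F := le_csSup hGbdd h1S
  have hcond : conductorNum (gen3 d₁ d₂ d₃) = F + 1 := by
    apply le_antisymm
    · exact Nat.sInf_le (fun n hn => hFmax n (by omega))
    · by_contra hc
      push_neg at hc
      simp only [conductorNum] at hc
      have hne : {c : ℕ | ∀ n, c ≤ n → n ∈ gen3 d₁ d₂ d₃}.Nonempty :=
        ⟨F + 1, fun n hn => hFmax n (by omega)⟩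
      have hmem := Nat.sInf_mem hne
      exact hFgap (hmem F (by omega))
  have hsym' : ∀ n, n ≤ F → (n ∉ gen3 d₁ d₂ d₃ ↔ F - n ∈ gen3 d₁ d₂ d₃) := by
    intro n hn
    have h' := hsym n (by rw [hcond]; omega)
    rw [hcond] at h'
    simpa using h'
  -- pseudo-Frobenius is unique
  have hPF : ∀ n, n ∉ gen3 d₁ d₂ d₃ → n + d₁ ∈ gen3 d₁ d₂ d₃ →
      n + d₂ ∈ gen3 d₁ d₂ d₃ → n + d₃ ∈ gen3 d₁ d₂ d₃ → n = F := by
    intro n hn hn1 hn2 hn3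
    have hnF : n ≤ F := by
      by_contra hc
      push_neg at hc
      exact hn (hFmax n hc)
    by_contra hne
    have hFn : F - n ∈ gen3 d₁ d₂ d₃ := (hsym' n hnF).mp hn
    obtain ⟨a, b, c, habc⟩ := hFn
    have hFS : F ∈ gen3 d₁ d₂ d₃ := by
      rcases Nat.eq_zero_or_pos a with ha | ha
      · rcases Nat.eq_zero_or_pos b with hb | hb
        · rcases Nat.eq_zero_or_pos c with hc | hc
          · exfalso
            rw [ha, hb, hc] at habc
            simp at habc
            omega
          · obtain ⟨c', rfl⟩ : ∃ c', c = c' + 1 := ⟨c - 1, by omega⟩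
            have hrest : a * d₁ + b * d₂ + c' * d₃ ∈ gen3 d₁ d₂ d₃ := ⟨a, b, c', rfl⟩
            have he : (c' + 1) * d₃ = c' * d₃ + d₃ := by ring
            have : F = (n + d₃) + (a * d₁ + b * d₂ + c' * d₃) := by omega
            rw [this]
            exact gen3_add hn3 hrest
        · obtain ⟨b', rfl⟩ : ∃ b', b = b' + 1 := ⟨b - 1, by omega⟩
          have hrest : a * d₁ + b' * d₂ + c * d₃ ∈ gen3 d₁ d₂ d₃ := ⟨a, b', c, rfl⟩
          have he : (b' + 1) * d₂ = b' * d₂ + d₂ := by ring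
          have : F = (n + d₂) + (a * d₁ + b' * d₂ + c * d₃) := by omega
          rw [this]
          exact gen3_add hn2 hrest
      · obtain ⟨a', rfl⟩ : ∃ a', a = a' + 1 := ⟨a - 1, by omega⟩
        have hrest : a' * d₁ + b * d₂ + c * d₃ ∈ gen3 d₁ d₂ d₃ := ⟨a', b, c, rfl⟩
        have he : (a' + 1) * d₁ = a' * d₁ + d₁ := by ring
        have : F = (n + d₁) + (a' * d₁ + b * d₂ + c * d₃) := by omega
        rw [this]
        exact gen3_add hn1 hrest
    exact hFgap hFS
  -- the Apery element W
  set W := F + d₁ with hWdef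
  have hWS : W ∈ gen3 d₁ d₂ d₃ := hFmax _ (by omega)
  have hWAp : ∀ s ∈ gen3 d₁ d₂ d₃, W ≠ d₁ + s := by
    intro s hs heq
    have : s = F := by omega
    rw [this] at hs
    exact hFgap hs
  -- climbing within the Apery set
  have hclimb : ∀ k, ∀ x, x ∈ gen3 d₁ d₂ d₃ → (∀ s ∈ gen3 d₁ d₂ d₃, x ≠ d₁ + s) →
      W - x = k → ∃ p q, x + (p * d₂ + q * d₃) = W := by
    intro k
    induction k using Nat.strong_induction_on with
    | _ k ih =>
      intro x hxS hxAp hk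
      by_cases hxW : x = W
      · exact ⟨0, 0, by simp [hxW]⟩
      · have hxle : x ≤ W := by
          by_contra hc
          push_neg at hc
          have hmem : x - d₁ ∈ gen3 d₁ d₂ d₃ := hFmax _ (by omega)
          exact hxAp _ hmem (by omega)
        have hstep : (x + d₂ ∈ gen3 d₁ d₂ d₃ ∧ ∀ s ∈ gen3 d₁ d₂ d₃, x + d₂ ≠ d₁ + s) ∨
            (x + d₃ ∈ gen3 d₁ d₂ d₃ ∧ ∀ s ∈ gen3 d₁ d₂ d₃, x + d₃ ≠ d₁ + s) := by
          have hx2S : x + d₂ ∈ gen3 d₁ d₂ d₃ := gen3_add hxS gen3_d₂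
          have hx3S : x + d₃ ∈ gen3 d₁ d₂ d₃ := gen3_add hxS gen3_d₃
          by_contra hcon
          push_neg at hcon
          obtain ⟨hc2, hc3⟩ := hcon
          obtain ⟨s₂, hs₂S, hs₂⟩ := hc2 hx2S
          obtain ⟨s₃, hs₃S, hs₃⟩ := hc3 hx3S
          rcases Nat.eq_zero_or_pos x with hx0 | hxpos
          · -- x = 0 : d₂ = d₁ + s₂ with s₂ < d₂ forces d₂ ∈ gen2 d₁ d₃
            rw [hx0] at hs₂
            have hs₂lt : s₂ < d₂ := by omega
            obtain ⟨a, ha⟩ := gen3_small (by omega) (by omega) hs₂S hs₂lt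
            have e : (a + 1) * d₁ + 0 * d₃ = a * d₁ + d₁ := by ring
            exact hmin2 ⟨a + 1, 0, by omega⟩
          · have hxd₁ : d₁ ≤ x := by
              rcases gen3_min (by omega) (by omega) hxS with h | h <;> omega
            set n := x - d₁ with hn
            have hnS : n ∉ gen3 d₁ d₂ d₃ := by
              intro hmem
              exact hxAp n hmem (by omega)
            have hn1 : n + d₁ ∈ gen3 d₁ d₂ d₃ := by
              have : n + d₁ = x := by omega
              rw [this]; exact hxS
            have hn2 : n + d₂ ∈ gen3 d₁ d₂ d₃ := by
              have : n + d₂ = s₂ := by omega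
              rw [this]; exact hs₂S
            have hn3 : n + d₃ ∈ gen3 d₁ d₂ d₃ := by
              have : n + d₃ = s₃ := by omega
              rw [this]; exact hs₃S
            have := hPF n hnS hn1 hn2 hn3
            exact hxW (by omega)
        rcases hstep with ⟨hS2, hAp2⟩ | ⟨hS3, hAp3⟩
        · obtain ⟨p, q, hpq⟩ := ih (W - (x + d₂)) (by omega) _ hS2 hAp2 rfl
          refine ⟨p + 1, q, ?_⟩
          have he : (p + 1) * d₂ = p * d₂ + d₂ := by ring
          omega
        · obtain ⟨p, q, hpq⟩ := ih (W - (x + d₃)) (by omega) _ hS3 hAp3 rfl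
          refine ⟨p, q + 1, ?_⟩
          have he : (q + 1) * d₃ = q * d₃ + d₃ := by ring
          omega
  -- Apery element in each residue class
  have hres : ∀ r, r < d₁ → ∃ x, x ∈ gen3 d₁ d₂ d₃ ∧ (∀ s ∈ gen3 d₁ d₂ d₃, x ≠ d₁ + s) ∧
      x % d₁ = r := by
    intro r hr
    have hCne : {n | n ∈ gen3 d₁ d₂ d₃ ∧ n % d₁ = r}.Nonempty := by
      refine ⟨r + d₁ * (N + 1), ⟨hN _ ?_, ?_⟩⟩
      · have : N + 1 ≤ d₁ * (N + 1) := Nat.le_mul_of_pos_left _ (by omega)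
        omega
      · simp [Nat.add_mul_mod_self_left, Nat.mod_eq_of_lt hr]
    set x := sInf {n | n ∈ gen3 d₁ d₂ d₃ ∧ n % d₁ = r} with hx
    have hxC := Nat.sInf_mem hCne
    refine ⟨x, hxC.1, ?_, hxC.2⟩
    intro s hs heq
    have hsC : s ∈ {n | n ∈ gen3 d₁ d₂ d₃ ∧ n % d₁ = r} := by
      refine ⟨hs, ?_⟩
      have : x % d₁ = s % d₁ := by rw [heq, Nat.add_mod_left]
      rw [← this, hxC.2]
    have := Nat.sInf_le hsC
    omega
  -- gcd structure of d₂, d₃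
  set g := Nat.gcd d₂ d₃ with hgdef
  have hgpos : 0 < g := Nat.gcd_pos_of_pos_left _ hd₂
  set β := d₂ / g with hβdef
  set γ := d₃ / g with hγdef
  have hβ : g * β = d₂ := Nat.mul_div_cancel' (Nat.gcd_dvd_left _ _)
  have hγ : g * γ = d₃ := Nat.mul_div_cancel' (Nat.gcd_dvd_right _ _)
  have hcop : Nat.Coprime β γ := Nat.coprime_div_gcd_div_gcd hgpos
  have hβ1 : 2 ≤ β := by
    rcases Nat.lt_or_ge β 2 with hb | hb
    · exfalso
      interval_cases β
      · simp at hβ; omega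
      · have hdvd : d₂ ∣ d₃ := by
          rw [← hβ]; simpa using Nat.gcd_dvd_right d₂ d₃
        obtain ⟨k, hk⟩ := hdvd
        exact hmin3 ⟨0, k, by rw [hk]; ring⟩
    · exact hb
  have hγ1 : 2 ≤ γ := by
    rcases Nat.lt_or_ge γ 2 with hb | hb
    · exfalso
      interval_cases γ
      · simp at hγ; omega
      · have hdvd : d₃ ∣ d₂ := by
          rw [← hγ]; simpa using Nat.gcd_dvd_left d₂ d₃
        have := Nat.le_of_dvd hd₂ hdvd
        omega
    · exact hb
  have hγd2 : γ * d₂ = β * d₃ := by rw [← hβ, ← hγ]; ring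
  clear hβdef hγdef
  clear_value β γ
  -- canonical representations
  have hred : ∀ c : ℕ, ∀ b : ℕ, ∃ b' c', c' < β ∧ b' * d₂ + c' * d₃ = b * d₂ + c * d₃ := by
    intro c
    induction c using Nat.strong_induction_on with
    | _ c ih =>
      intro b
      by_cases hc : c < β
      · exact ⟨b, c, hc, rfl⟩
      · push_neg at hc
        obtain ⟨b', c', hlt, heq⟩ := ih (c - β) (by omega) (b + γ)
        refine ⟨b', c', hlt, ?_⟩
        have e1 : (b + γ) * d₂ = b * d₂ + γ * d₂ := by ring
        have e2 : ((c - β) + β) * d₃ = c * d₃ := by rw [Nat.sub_add_cancel hc]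
        have e3 : ((c - β) + β) * d₃ = (c - β) * d₃ + β * d₃ := by ring
        omega
  have huniq : ∀ b c b' c' : ℕ, c < β → c' < β →
      b * d₂ + c * d₃ = b' * d₂ + c' * d₃ → b = b' ∧ c = c' := by
    intro b c b' c' hc hc' heq
    have heqg : g * (b * β + c * γ) = g * (b' * β + c' * γ) := by
      have e1 : g * (b * β + c * γ) = b * (g * β) + c * (g * γ) := by ring
      have e2 : g * (b' * β + c' * γ) = b' * (g * β) + c' * (g * γ) := by ring
      rw [e1, e2, hβ, hγ]
      exact heq
    have heq2 : b * β + c * γ = b' * β + c' * γ := Nat.eq_of_mul_eq_mul_left hgpos heqg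
    have hmod : c * γ % β = c' * γ % β := by
      have e1 : c * γ % β = (c * γ + b * β) % β := (Nat.add_mul_mod_self_right _ _ _).symm
      have e2 : c' * γ % β = (c' * γ + b' * β) % β := (Nat.add_mul_mod_self_right _ _ _).symm
      rw [e1, e2]
      congr 1
      omega
    have hceq : c = c' := by
      have hmodeq : c ≡ c' [MOD β] :=
        Nat.ModEq.cancel_right_of_coprime hcop hmod
      have := hmodeq
      unfold Nat.ModEq at this
      rw [Nat.mod_eq_of_lt hc, Nat.mod_eq_of_lt hc'] at this
      exact this
    refine ⟨?_, hceq⟩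
    subst hceq
    have : b * β = b' * β := by omega
    exact Nat.eq_of_mul_eq_mul_right (by omega) this
  -- canonical representation of W
  have hWrep : ∃ b c, W = b * d₂ + c * d₃ := by
    obtain ⟨a, b, c, habc⟩ := hWS
    rcases Nat.eq_zero_or_pos a with ha | ha
    · exact ⟨b, c, by rw [habc, ha]; ring⟩
    · exfalso
      obtain ⟨a', rfl⟩ : ∃ a', a = a' + 1 := ⟨a - 1, by omega⟩
      refine hWAp (a' * d₁ + b * d₂ + c * d₃) ⟨a', b, c, rfl⟩ ?_
      have : (a' + 1) * d₁ = a' * d₁ + d₁ := by ring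
      omega
  obtain ⟨B₀, C₀, hW₀⟩ := hWrep
  obtain ⟨B, C, hCβ, hBC⟩ := hred C₀ B₀
  have hWcan : W = B * d₂ + C * d₃ := by rw [hW₀, ← hBC]
  -- the target finset
  set U : Finset (ℕ × ℕ) :=
    (Finset.range (B + 1) ×ˢ Finset.range (C + 1)) ∪
      (Finset.range (B + 1 - γ) ×ˢ Finset.Ico (C + 1) β) with hU
  -- every residue class gives a canonical pair in U
  have hfull : ∀ r, r < d₁ → ∃ p : ℕ × ℕ, p ∈ U ∧ (p.1 * d₂ + p.2 * d₃) % d₁ = r := by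
    intro r hr
    obtain ⟨x, hxS, hxAp, hxr⟩ := hres r hr
    -- representation of x without d₁
    have hxrep : ∃ b c, x = b * d₂ + c * d₃ := by
      obtain ⟨a, b, c, habc⟩ := hxS
      rcases Nat.eq_zero_or_pos a with ha | ha
      · exact ⟨b, c, by rw [habc, ha]; ring⟩
      · exfalso
        obtain ⟨a', rfl⟩ : ∃ a', a = a' + 1 := ⟨a - 1, by omega⟩
        refine hxAp (a' * d₁ + b * d₂ + c * d₃) ⟨a', b, c, rfl⟩ ?_
        have : (a' + 1) * d₁ = a' * d₁ + d₁ := by ring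
        omega
    obtain ⟨b₀, c₀, hx₀⟩ := hxrep
    obtain ⟨b, c, hcβ, hbc⟩ := hred c₀ b₀
    have hxcan : x = b * d₂ + c * d₃ := by rw [hx₀, ← hbc]
    -- climb to W
    obtain ⟨p, q, hpq⟩ := hclimb (W - x) x hxS hxAp rfl
    -- W = (b+p) d₂ + (c+q) d₃
    have hWsum : W = (b + p) * d₂ + (c + q) * d₃ := by
      have e1 : (b + p) * d₂ = b * d₂ + p * d₂ := by ring
      have e2 : (c + q) * d₃ = c * d₃ + q * d₃ := by ring
      omega
    -- canonical form of (b+p, c+q)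
    obtain ⟨k, rem, hremβ, hdm⟩ : ∃ k rem, rem < β ∧ β * k + rem = c + q :=
      ⟨(c + q) / β, (c + q) % β, Nat.mod_lt _ (by omega), Nat.div_add_mod _ _⟩
    have hcan2 : (b + p + k * γ) * d₂ + rem * d₃ = (b + p) * d₂ + (c + q) * d₃ := by
      have e1 : (b + p + k * γ) * d₂ = (b + p) * d₂ + k * (γ * d₂) := by ring
      have e2 : (c + q) * d₃ = (β * k) * d₃ + rem * d₃ := by
        rw [← Nat.add_mul, hdm]
      have e3 : k * (β * d₃) = (β * k) * d₃ := by ring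
      rw [e1, hγd2, e3]
      omega
    have hBCeq : B = b + p + k * γ ∧ C = rem := by
      have := huniq (b + p + k * γ) rem B C hremβ hCβ
        (by rw [hcan2, ← hWsum, hWcan])
      exact ⟨this.1.symm, this.2.symm⟩
    obtain ⟨hB, hC⟩ := hBCeq
    refine ⟨(b, c), ?_, ?_⟩
    · rw [hU]
      rcases le_or_gt c C with hcC | hcC
      · apply Finset.mem_union_left
        rw [Finset.mem_product]
        constructor
        · rw [Finset.mem_range]; omega
        · rw [Finset.mem_range]; omega
      · -- c > C forces k ≥ 1
        have hk1 : 1 ≤ k := by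
          by_contra hk0
          push_neg at hk0
          have hkz : k = 0 := by omega
          rw [hkz] at hdm
          simp at hdm
          omega
        have hγk : γ ≤ k * γ := Nat.le_mul_of_pos_left _ (by omega)
        apply Finset.mem_union_right
        rw [Finset.mem_product]
        constructor
        · rw [Finset.mem_range]; omega
        · rw [Finset.mem_Ico]; omega
    · simp only []
      rw [← hxcan, hxr]
  -- counting
  have hcardU : U.card ≤ (B + 1) * (C + 1) + (B + 1 - γ) * (β - (C + 1)) := by
    calc U.card ≤ ((Finset.range (B + 1) ×ˢ Finset.range (C + 1)).card +
        (Finset.range (B + 1 - γ) ×ˢ Finset.Ico (C + 1) β).card) := Finset.card_union_le _ _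
      _ = (B + 1) * (C + 1) + (B + 1 - γ) * (β - (C + 1)) := by
          rw [Finset.card_product, Finset.card_product, Finset.card_range, Finset.card_range,
            Finset.card_range, Nat.card_Ico]
  have hd₁U : d₁ ≤ U.card := by
    classical
    have hmaps : ∀ r ∈ Finset.range d₁,
        (fun r => if hr : r < d₁ then (hfull r hr).choose else (0, 0)) r ∈ U := by
      intro r hrm
      rw [Finset.mem_range] at hrm
      simp only [dif_pos hrm]
      exact (hfull r hrm).choose_spec.1
    have hinj : ∀ r ∈ Finset.range d₁, ∀ r' ∈ Finset.range d₁,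
        (fun r => if hr : r < d₁ then (hfull r hr).choose else (0, 0)) r =
        (fun r => if hr : r < d₁ then (hfull r hr).choose else (0, 0)) r' → r = r' := by
      intro r hrm r' hrm' heq
      rw [Finset.mem_range] at hrm hrm'
      simp only [dif_pos hrm, dif_pos hrm'] at heq
      have h1 := (hfull r hrm).choose_spec.2
      have h2 := (hfull r' hrm').choose_spec.2
      rw [heq] at h1
      rw [h1] at h2
      exact h2
    have := Finset.card_le_card_of_injOn _ hmaps hinj
    simpa using this
  have hkey : d₁ ≤ (B + 1) * (C + 1) + (B + 1 - γ) * (β - (C + 1)) := le_trans hd₁U hcardU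
  -- final algebra
  have hFW : F + (d₁ + d₂ + d₃) = (B + 1) * d₂ + (C + 1) * d₃ := by
    have e1 : (B + 1) * d₂ = B * d₂ + d₂ := by ring
    have e2 : (C + 1) * d₃ = C * d₃ + d₃ := by ring
    omega
  rw [hFW]
  exact final_alg hd₂ hd₃ hCβ hγd2 hkey

end VB

/-- For a symmetric `S₃ = ⟨d₁,d₂,d₃⟩` minimally generated by three positive integers,
`v = π₃/g₃²` satisfies `0 < v ≤ 1/4`; equivalently `(F₃ + d₁+d₂+d₃)² ≥ 4·d₁d₂d₃`. -/
theorem v_bounds_symmetric (d₁ d₂ d₃ : ℕ) (h : MinGen3 d₁ d₂ d₃)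
    (hsym : IsSymmetric (gen3 d₁ d₂ d₃))
    (g₃ v : ℝ)
    (hg₃ : g₃ = (frobeniusNum (gen3 d₁ d₂ d₃) : ℝ) + ((d₁ : ℝ) + d₂ + d₃))
    (hv : v = ((d₁ : ℝ) * d₂ * d₃) / g₃ ^ 2) :
    (0 < v ∧ v ≤ 1 / 4) ∧
      4 * (d₁ * d₂ * d₃) ≤ (frobeniusNum (gen3 d₁ d₂ d₃) + (d₁ + d₂ + d₃)) ^ 2 := by
  have hnat : 4 * (d₁ * d₂ * d₃) ≤ (frobeniusNum (gen3 d₁ d₂ d₃) + (d₁ + d₂ + d₃)) ^ 2 :=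
    VB.main_ineq h hsym
  have hd13 : 3 ≤ d₁ := h.1
  have h12 : d₁ < d₂ := h.2.1
  have h23 : d₂ < d₃ := h.2.2.1
  have hd₁R : (0:ℝ) < d₁ := by exact_mod_cast (by omega : 0 < d₁)
  have hd₂R : (0:ℝ) < d₂ := by exact_mod_cast (by omega : 0 < d₂)
  have hd₃R : (0:ℝ) < d₃ := by exact_mod_cast (by omega : 0 < d₃)
  have hFR : (0:ℝ) ≤ (frobeniusNum (gen3 d₁ d₂ d₃) : ℝ) := by positivity
  have hg₃pos : 0 < g₃ := by rw [hg₃]; linarith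
  have hcast : 4 * ((d₁:ℝ) * d₂ * d₃) ≤ g₃ ^ 2 := by
    rw [hg₃]
    have h2 : ((4 * (d₁ * d₂ * d₃) : ℕ) : ℝ) ≤
        (((frobeniusNum (gen3 d₁ d₂ d₃) + (d₁ + d₂ + d₃)) ^ 2 : ℕ) : ℝ) := by
      exact_mod_cast hnat
    push_cast at h2
    linarith
  refine ⟨⟨?_, ?_⟩, hnat⟩
  · rw [hv]
    exact div_pos (by positivity) (by positivity)
  · rw [hv, div_le_iff₀ (by positivity : (0:ℝ) < g₃ ^ 2)]
    linarith
end
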